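/- arXiv:2603.12947 — 6 statements merged into one kernel-verified Lean document; each statement's English description precedes it below -/
import Mathlib

section
/- Let k be a natural number and n > 2. For every j in {1,...,k}, let a^j = (a^j_1,...,a^j_n) be a vector in the unit ball of ℓ_∞^n (i.e. |a^j_i| ≤ 1 for all i). Then there exist signs θ_1,...,θ_n ∈ {-1,1} such that for every j in {1,...,k}, |∑_{i=1}^n θ_i a^j_i| ≤ 2^k. -/
/-!
If there are more than `2 ^ k` coordinates, two of them, `i₁ ≠ i₂`, have the same sign pattern
across the `k` vectors. Then `a j i₁ - a j i₂` again lies in `[-1, 1]`, so replacing coordinate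
`i₁` by this difference and dropping `i₂` gives a shorter instance; signs for it extend by
`θ i₂ := -θ i₁`, which leaves every signed sum unchanged. With at most `2 ^ k` coordinates,
all signs `+1` already work.
-/

open Finset Function

lemma abs_sub_le_of_nonneg_iff {G : Type*} [AddCommGroup G] [LinearOrder G] [IsOrderedAddMonoid G]
    {x y c : G} (hx : |x| ≤ c) (hy : |y| ≤ c) (hxy : 0 ≤ x ↔ 0 ≤ y) : |x - y| ≤ c := by
  rcases le_or_gt 0 x with h | h
  · have h' := hxy.mp h
    exact abs_sub_le_of_nonneg_of_le h ((abs_of_nonneg h).symm.trans_le hx) h'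
      ((abs_of_nonneg h').symm.trans_le hy)
  · have h' : y < 0 := lt_of_not_ge (mt hxy.mpr h.not_ge)
    rw [← neg_sub_neg, abs_sub_comm]
    exact abs_sub_le_of_nonneg_of_le (neg_nonneg.mpr h.le) ((abs_of_neg h).symm.trans_le hx)
      (neg_nonneg.mpr h'.le) ((abs_of_neg h').symm.trans_le hy)

lemma exists_ne_forall_iff_of_two_pow_card_lt {κ ι : Type*} [Fintype κ] {s : Finset ι}
    (p : κ → ι → Prop) (hs : 2 ^ Fintype.card κ < #s) :
    ∃ i₁ ∈ s, ∃ i₂ ∈ s, i₁ ≠ i₂ ∧ ∀ j, (p j i₁ ↔ p j i₂) := by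
  classical
  have hcard : #(univ : Finset (Finset κ)) < #s := by
    rwa [card_univ, Fintype.card_finset]
  obtain ⟨i₁, hi₁, i₂, hi₂, hne, hpat⟩ := exists_ne_map_eq_of_card_lt_of_maps_to hcard
    (f := fun i => ({j | p j i} : Finset κ)) (fun _ _ => mem_coe.mpr (mem_univ _))
  exact ⟨i₁, hi₁, i₂, hi₂, hne, fun j => by simpa using Finset.ext_iff.mp hpat j⟩

lemma sum_update_neg_mul_eq_sum_erase_mul_update_sub {R ι : Type*} [CommRing R] [DecidableEq ι]
    {s : Finset ι} {i₁ i₂ : ι} (hi₁ : i₁ ∈ s) (hi₂ : i₂ ∈ s) (hne : i₁ ≠ i₂) (θ a : ι → R) :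
    ∑ i ∈ s, update θ i₂ (-θ i₁) i * a i
      = ∑ i ∈ s.erase i₂, θ i * update a i₁ (a i₁ - a i₂) i := by
  have hi₁' : i₁ ∈ s.erase i₂ := mem_erase.mpr ⟨hne, hi₁⟩
  rw [← sum_erase_add s _ hi₂, ← sum_erase_add _ _ hi₁', ← sum_erase_add _ _ hi₁',
    update_self, update_self, update_of_ne hne]
  have hrest : ∀ i ∈ (s.erase i₂).erase i₁,
      update θ i₂ (-θ i₁) i * a i = θ i * update a i₁ (a i₁ - a i₂) i := fun i hi => by
    rw [update_of_ne (ne_of_mem_erase (mem_of_mem_erase hi)), update_of_ne (ne_of_mem_erase hi)]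
  rw [sum_congr rfl hrest]
  ring

theorem exists_signs_abs_sum_mul_le_two_pow {R κ ι : Type*} [CommRing R] [LinearOrder R]
    [IsStrictOrderedRing R] [Fintype κ] (s : Finset ι)
    (a : κ → ι → R) (ha : ∀ j, ∀ i ∈ s, |a j i| ≤ 1) :
    ∃ θ : ι → R, (∀ i, θ i = 1 ∨ θ i = -1) ∧
      ∀ j, |∑ i ∈ s, θ i * a j i| ≤ 2 ^ Fintype.card κ := by
  classical
  induction s using Finset.strongInduction generalizing a with
  | _ s ih =>
    by_cases hs : #s ≤ 2 ^ Fintype.card κ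
    · refine ⟨1, fun _ => Or.inl rfl, fun j => ?_⟩
      calc |∑ i ∈ s, (1 : ι → R) i * a j i| ≤ ∑ i ∈ s, |a j i| := by
            simpa using abs_sum_le_sum_abs (a j) s
        _ ≤ #s • (1 : R) := sum_le_card_nsmul _ _ _ (ha j)
        _ ≤ 2 ^ Fintype.card κ := by simpa using (Nat.cast_le (α := R)).mpr hs
    obtain ⟨i₁, hi₁, i₂, hi₂, hne, hsign⟩ :=
      exists_ne_forall_iff_of_two_pow_card_lt (fun j i => 0 ≤ a j i) (not_le.mp hs)
    set a' : κ → ι → R := fun j => update (a j) i₁ (a j i₁ - a j i₂)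
    have ha' : ∀ j, ∀ i ∈ s.erase i₂, |a' j i| ≤ 1 := by
      intro j i hi
      rcases eq_or_ne i i₁ with rfl | hii
      · simpa [a'] using abs_sub_le_of_nonneg_iff (ha j i hi₁) (ha j i₂ hi₂) (hsign j)
      · simpa [a', hii] using ha j i (mem_of_mem_erase hi)
    obtain ⟨θ, hθ, hsum⟩ := ih _ (erase_ssubset hi₂) a' ha'
    refine ⟨update θ i₂ (-θ i₁), fun i => ?_, fun j => ?_⟩
    · rcases eq_or_ne i i₂ with rfl | hii
      · rcases hθ i₁ with h | h <;> simp [h]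
      · simpa [hii] using hθ i
    · rw [sum_update_neg_mul_eq_sum_erase_mul_update_sub hi₁ hi₂ hne]
      exact hsum j

theorem common_signs_lemma_general (k n : ℕ) (a : Fin k → Fin n → ℝ)
    (ha : ∀ j i, |a j i| ≤ 1) :
    ∃ θ : Fin n → ℝ, (∀ i, θ i = 1 ∨ θ i = -1) ∧
      ∀ j, |∑ i, θ i * a j i| ≤ 2 ^ k := by
  simpa using exists_signs_abs_sum_mul_le_two_pow univ a fun j i _ => ha j i

/-- **Common signs lemma.** Given `k` vectors `a^1, …, a^k` in the unit ball of `ℓ_∞^n`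
(with `n > 2`), there is a single choice of signs `θ_1, …, θ_n ∈ {-1, 1}` such that
`|∑_{i=1}^n θ_i a^j_i| ≤ 2^k` for every `j ∈ {1, …, k}`. -/
theorem common_signs_lemma (k n : ℕ) (hn : 2 < n) (a : Fin k → Fin n → ℝ)
    (ha : ∀ j i, |a j i| ≤ 1) :
    ∃ θ : Fin n → ℝ, (∀ i, θ i = 1 ∨ θ i = -1) ∧
      ∀ j, |∑ i, θ i * a j i| ≤ 2 ^ k :=
  common_signs_lemma_general k n a ha
end

section
/- Let X be a Banach space with the Daugavet property. Then the closed unit ball B_X is not a slicely countably determined set; that is, for every countable collection {S_n} of slices of B_X there exists a choice x_n ∈ S_n such that B_X is not contained in the closed convex hull of {x_n : n ∈ ℕ}. In fact, 0 does not belong to the closed convex hull of {x_n : n ∈ ℕ}. -/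
open Metric

/-- The slice of a set `A` determined by a functional `f` and `δ > 0`. -/
def ballSlice {X : Type*} [NormedAddCommGroup X] [NormedSpace ℝ X]
    (A : Set X) (f : X →L[ℝ] ℝ) (δ : ℝ) : Set X :=
  {y ∈ A | sSup (f '' A) - δ < f y}

open scoped Classical in
/-- Auxiliary recursive choice sequence: state is `(current point, partial sum)`. -/
noncomputable def scdAux {X : Type*} [NormedAddCommGroup X]
    (Q : ℕ → X → X → Prop) (A : ∀ (n : ℕ) (s : X), s ≠ 0 → ∃ y, Q n s y) (b : X × X) :
    ℕ → X × X
  | 0 => b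
  | n + 1 =>
    if hs : (scdAux Q A b n).2 ≠ 0 then
      ((A (n + 1) _ hs).choose, (scdAux Q A b n).2 + (A (n + 1) _ hs).choose)
    else (0, 0)

theorem scdAux_succ {X : Type*} [NormedAddCommGroup X]
    (Q : ℕ → X → X → Prop) (A : ∀ (n : ℕ) (s : X), s ≠ 0 → ∃ y, Q n s y) (b : X × X)
    (n : ℕ) (hs : (scdAux Q A b n).2 ≠ 0) :
    Q (n + 1) (scdAux Q A b n).2 (scdAux Q A b (n + 1)).1 ∧
      (scdAux Q A b (n + 1)).2 = (scdAux Q A b n).2 + (scdAux Q A b (n + 1)).1 := by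
  rw [scdAux]
  rw [dif_pos hs]
  exact ⟨(A (n + 1) _ hs).choose_spec, rfl⟩

/-- Daugavet step: from any nonzero `s` we can pick `y` in the slice with
`‖s + y‖ > ‖s‖ + 1 - ε * max 1 ‖s‖`. -/
theorem daugavet_step {X : Type*} [NormedAddCommGroup X] [NormedSpace ℝ X]
    (hD : ∀ x : X, ‖x‖ = 1 → ∀ (f : X →L[ℝ] ℝ) (δ : ℝ), 0 < δ → ∀ ε > (0 : ℝ),
      ∃ y ∈ ballSlice (closedBall (0 : X) 1) f δ, 2 - ε < ‖x + y‖)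
    (f : X →L[ℝ] ℝ) (δ : ℝ) (hδ : 0 < δ) (ε : ℝ) (hε : 0 < ε) (s : X) (hs : s ≠ 0) :
    ∃ y, y ∈ ballSlice (closedBall (0 : X) 1) f δ ∧ ‖y‖ ≤ 1 ∧
      ‖s‖ + 1 - ε * max 1 ‖s‖ < ‖s + y‖ := by
  set t : ℝ := ‖s‖ with ht
  have ht0 : 0 < t := norm_pos_iff.mpr hs
  set u : X := ‖s‖⁻¹ • s with hu
  have hu1 : ‖u‖ = 1 := norm_smul_inv_norm hs
  obtain ⟨y, hy, h2⟩ := hD u hu1 f δ hδ ε hε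
  have hy1 : ‖y‖ ≤ 1 := by
    have := hy.1
    rwa [mem_closedBall_zero_iff] at this
  refine ⟨y, hy, hy1, ?_⟩
  have hsu : s = t • u := by
    rw [hu, smul_smul, mul_inv_cancel₀ (ne_of_gt ht0), one_smul]
  rcases le_total t 1 with h | h
  · have hdecomp : s + y = (u + y) - (1 - t) • u := by
      rw [hsu]; module
    have h3 : ‖u + y‖ - ‖(1 - t) • u‖ ≤ ‖s + y‖ := by
      rw [hdecomp]; exact norm_sub_norm_le _ _
    have h4 : ‖(1 - t) • u‖ = 1 - t := by
      rw [norm_smul, hu1, mul_one, Real.norm_eq_abs, abs_of_nonneg (by linarith)]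
    have hmax : max 1 t = 1 := max_eq_left h
    rw [hmax]
    nlinarith [h3, h2]
  · have hdecomp : s + y = t • (u + y) - (t - 1) • y := by
      rw [hsu]; module
    have h3 : ‖t • (u + y)‖ - ‖(t - 1) • y‖ ≤ ‖s + y‖ := by
      rw [hdecomp]; exact norm_sub_norm_le _ _
    have h4 : ‖t • (u + y)‖ = t * ‖u + y‖ := by
      rw [norm_smul, Real.norm_eq_abs, abs_of_pos ht0]
    have h5 : ‖(t - 1) • y‖ ≤ t - 1 := by
      rw [norm_smul, Real.norm_eq_abs, abs_of_nonneg (by linarith)]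
      nlinarith
    have hmax : max 1 t = t := max_eq_right h
    rw [hmax]
    nlinarith [h3, h2]

/-- In a Banach space `X` with the Daugavet property, the closed unit ball `B_X` is not a
slicely countably determined set: for every countable collection of slices of `B_X` there is
a choice `x_n ∈ S_n` such that `0` (hence not all of `B_X`) lies outside the closed convex
hull of `{x_n : n ∈ ℕ}`. -/
theorem daugavet_ball_not_SCD {X : Type*} [NormedAddCommGroup X] [NormedSpace ℝ X]
    [CompleteSpace X] [Nontrivial X]
    (hD : ∀ x : X, ‖x‖ = 1 → ∀ (f : X →L[ℝ] ℝ) (δ : ℝ), 0 < δ → ∀ ε > (0 : ℝ),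
      ∃ y ∈ ballSlice (closedBall (0 : X) 1) f δ, 2 - ε < ‖x + y‖)
    (f : ℕ → X →L[ℝ] ℝ) (δ : ℕ → ℝ) (hδ : ∀ n, 0 < δ n) :
    ∃ x : ℕ → X, (∀ n, x n ∈ ballSlice (closedBall (0 : X) 1) (f n) (δ n)) ∧
      (0 : X) ∉ closure (convexHull ℝ (Set.range x)) ∧
      ¬ closedBall (0 : X) 1 ⊆ closure (convexHull ℝ (Set.range x)) := by
  -- the slice-choice predicate
  set Q : ℕ → X → X → Prop := fun n s y =>
    y ∈ ballSlice (closedBall (0 : X) 1) (f n) (δ n) ∧ ‖y‖ ≤ 1 ∧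
      ‖s‖ + 1 - (1 / 2 : ℝ) ^ (n + 2) / ((n : ℝ) + 1) * max 1 ‖s‖ < ‖s + y‖ with hQdef
  have A : ∀ (n : ℕ) (s : X), s ≠ 0 → ∃ y, Q n s y := by
    intro n s hs
    simp only [hQdef]
    exact daugavet_step hD (f n) (δ n) (hδ n) _ (by positivity) s hs
  -- a unit vector for the base step
  obtain ⟨v, hv⟩ := exists_ne (0 : X)
  set u : X := ‖v‖⁻¹ • v with hudef
  have hu1 : ‖u‖ = 1 := norm_smul_inv_norm hv
  have hu0 : u ≠ 0 := by
    intro h; rw [h, norm_zero] at hu1; norm_num at hu1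
  obtain ⟨y₀, hy₀⟩ := A 0 u hu0
  set b : X × X := (y₀, y₀) with hbdef
  set x : ℕ → X := fun n => (scdAux Q A b n).1 with hxdef
  set S : ℕ → X := fun n => (scdAux Q A b n).2 with hSdef
  -- the key invariant
  have key : ∀ n : ℕ, x n ∈ ballSlice (closedBall (0 : X) 1) (f n) (δ n) ∧ ‖x n‖ ≤ 1 ∧
      (n : ℝ) + 1 / 2 + (1 / 2 : ℝ) ^ n / 4 < ‖S n‖ ∧ ‖S n‖ ≤ (n : ℝ) + 1 ∧
      S n = ∑ i ∈ Finset.range (n + 1), x i := by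
    intro n
    induction n with
    | zero =>
      have hx0 : x 0 = y₀ := rfl
      have hS0 : S 0 = y₀ := rfl
      obtain ⟨hsl, hle1, hbig⟩ := hy₀
      have hub : ‖u + y₀‖ ≤ ‖u‖ + ‖y₀‖ := norm_add_le _ _
      rw [hu1] at hbig hub
      simp only [max_self, Nat.cast_zero] at hbig
      norm_num at hbig
      refine ⟨by rw [hx0]; exact hsl, by rw [hx0]; exact hle1, ?_, ?_, ?_⟩
      · rw [hS0]; push_cast; norm_num; linarith
      · rw [hS0]; push_cast; linarith
      · rw [hS0, Finset.sum_range_one, hx0]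
    | succ n ih =>
      obtain ⟨_, _, hlow, hup, hsum⟩ := ih
      have hSpos : (0 : ℝ) < ‖S n‖ := by
        have : (0 : ℝ) < (n : ℝ) + 1 / 2 + (1 / 2 : ℝ) ^ n / 4 := by positivity
        linarith
      have hSne : (scdAux Q A b n).2 ≠ 0 := norm_pos_iff.mp hSpos
      obtain ⟨hQ1', hrec'⟩ := scdAux_succ Q A b n hSne
      have hQ1 : Q (n + 1) (S n) (x (n + 1)) := hQ1'
      have hrec : S (n + 1) = S n + x (n + 1) := hrec' 
      obtain ⟨hsl, hle1, hbig⟩ := hQ1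
      rw [← hrec] at hbig
      have hmax : max 1 ‖S n‖ ≤ (n : ℝ) + 1 := by
        apply max_le _ hup
        have : (0 : ℝ) ≤ (n : ℝ) := Nat.cast_nonneg n
        linarith
      have hmax0 : (0 : ℝ) ≤ max 1 ‖S n‖ := le_trans zero_le_one (le_max_left _ _)
      have hpow3 : (1 / 2 : ℝ) ^ (n + 1 + 2) = (1 / 2 : ℝ) ^ n * (1 / 8) := by
        rw [show n + 1 + 2 = n + 3 from rfl, pow_add]; norm_num
      have hpow1 : (1 / 2 : ℝ) ^ (n + 1) = (1 / 2 : ℝ) ^ n * (1 / 2) := by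
        rw [pow_add]; norm_num
      have hd : (1 / 2 : ℝ) ^ (n + 1 + 2) / ((n : ℝ) + 1 + 1) * (1 ⊔ ‖S n‖) ≤
          (1 / 2 : ℝ) ^ n * (1 / 8) := by
        have hM : (1 ⊔ ‖S n‖) ≤ (n : ℝ) + 1 + 1 := by linarith
        rw [div_mul_eq_mul_div, div_le_iff₀ (by positivity), hpow3]
        nlinarith [pow_pos (show (0 : ℝ) < 1 / 2 by norm_num) n, hM, hmax0]
      refine ⟨hsl, hle1, ?_, ?_, ?_⟩
      · push_cast
        push_cast at hbig
        linarith [hbig, hd, hlow]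
      · rw [hrec]
        have := norm_add_le (S n) (x (n + 1))
        push_cast
        linarith
      · rw [hrec, hsum]
        exact (Finset.sum_range_succ x (n + 1)).symm
  -- every convex combination has norm at least 1/2
  have hhalf : ∀ z ∈ convexHull ℝ (Set.range x), (1 / 2 : ℝ) ≤ ‖z‖ := by
    intro z hz
    rw [mem_convexHull_iff_exists_fintype] at hz
    obtain ⟨ι, hι, w, p, hw0, hw1, hp, hzsum⟩ := hz
    choose k hk using hp
    set N := Finset.univ.sup k with hNdef
    have hSNlow := (key N).2.2.1
    have hSNsum := (key N).2.2.2.2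
    have hSNpos : (0 : ℝ) < ‖S N‖ := by
      have : (0 : ℝ) < (N : ℝ) + 1 / 2 + (1 / 2 : ℝ) ^ N / 4 := by positivity
      linarith
    have hSNne : S N ≠ 0 := norm_pos_iff.mp hSNpos
    obtain ⟨g, hg1, hgS'⟩ := exists_dual_vector ℝ (S N) (norm_ne_zero_iff.mpr hSNne)
    have hgS : g (S N) = ‖S N‖ := by exact_mod_cast hgS' 
    have hgx1 : ∀ m, g (x m) ≤ 1 := by
      intro m
      have h1 := g.le_opNorm (x m)
      rw [hg1, one_mul] at h1
      have h2 : ‖x m‖ ≤ 1 := (key m).2.1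
      calc g (x m) ≤ |g (x m)| := le_abs_self _
        _ = ‖g (x m)‖ := (Real.norm_eq_abs _).symm
        _ ≤ 1 := le_trans h1 h2
    have hgsum : (N : ℝ) + 1 / 2 < ∑ i ∈ Finset.range (N + 1), g (x i) := by
      have : ∑ i ∈ Finset.range (N + 1), g (x i) = g (S N) := by
        rw [hSNsum, map_sum]
      rw [this, hgS]
      have : (0 : ℝ) < (1 / 2 : ℝ) ^ N / 4 := by positivity
      linarith
    have hgx : ∀ m, m ≤ N → (1 / 2 : ℝ) < g (x m) := by
      intro m hm
      have hmem : m ∈ Finset.range (N + 1) := Finset.mem_range.mpr (by omega)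
      have herase : ∑ i ∈ (Finset.range (N + 1)).erase m, g (x i) ≤ (N : ℝ) := by
        calc ∑ i ∈ (Finset.range (N + 1)).erase m, g (x i)
            ≤ ∑ i ∈ (Finset.range (N + 1)).erase m, (1 : ℝ) :=
              Finset.sum_le_sum fun i _ => hgx1 i
          _ = ((Finset.range (N + 1)).erase m).card • (1 : ℝ) := by
              rw [Finset.sum_const]
          _ = (N : ℝ) := by
              rw [Finset.card_erase_of_mem hmem, Finset.card_range]
              simp
      have hsplit := Finset.sum_erase_add (Finset.range (N + 1)) (fun i => g (x i)) hmem
      linarith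
    have hgz : (1 / 2 : ℝ) ≤ g z := by
      rw [← hzsum, map_sum]
      have hterm : ∀ i, w i * (1 / 2) ≤ g (w i • p i) := by
        intro i
        rw [map_smul, smul_eq_mul]
        have hki : k i ≤ N := Finset.le_sup (Finset.mem_univ i)
        have h1 := hgx (k i) hki
        rw [hk i] at h1
        nlinarith [hw0 i]
      calc (1 / 2 : ℝ) = ∑ i, w i * (1 / 2) := by rw [← Finset.sum_mul, hw1, one_mul]
        _ ≤ ∑ i, g (w i • p i) := Finset.sum_le_sum fun i _ => hterm i
    have hzn : g z ≤ ‖z‖ := by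
      have h1 := g.le_opNorm z
      rw [hg1, one_mul] at h1
      calc g z ≤ |g z| := le_abs_self _
        _ = ‖g z‖ := (Real.norm_eq_abs _).symm
        _ ≤ ‖z‖ := h1
    linarith
  have hsub : closure (convexHull ℝ (Set.range x)) ⊆ {z : X | (1 / 2 : ℝ) ≤ ‖z‖} :=
    closure_minimal hhalf (isClosed_le continuous_const continuous_norm)
  have h0 : (0 : X) ∉ closure (convexHull ℝ (Set.range x)) := by
    intro h
    have := hsub h
    simp only [Set.mem_setOf_eq, norm_zero] at this
    norm_num at this
  exact ⟨x, fun n => (key n).1, h0, fun h => h0 (h (mem_closedBall_self zero_le_one))⟩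
end

section
/- Let X be an infinite-dimensional Banach space with the super alternative Daugavet property. Then the closed unit ball B_X with the relative weak topology does not have a countable π-base: for every countable collection {V_n} of nonempty relatively weakly open subsets of B_X, there exists a choice v_n ∈ V_n such that 0 is not in the weak closure of {v_n : n ∈ ℕ}. -/
open Metric

/-- `V` is a relatively weakly open subset of `A`: the trace on `A` of a set which is open
for the weak topology of the space. -/
def RelWeakOpen {X : Type*} [NormedAddCommGroup X] [NormedSpace ℝ X]
    (A V : Set X) : Prop :=
  ∃ U : Set (WeakSpace ℝ X), IsOpen U ∧ V = A ∩ U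

open Filter Topology NormedSpace

set_option maxHeartbeats 1000000

/-- If an infinite-dimensional Banach space `X` has the super alternative Daugavet property
(for every `x ∈ S_X`, every nonempty relatively weakly open `W ⊆ B_X` and every `ε > 0` there
is `y ∈ W` with `max ‖x + y‖ ‖x - y‖ > 2 - ε`), then `(B_X, w)` has no countable π-base:
for every countable collection `{V_n}` of nonempty relatively weakly open subsets of `B_X`
there is a choice `v_n ∈ V_n` such that `0` is not in the weak closure of `{v_n : n ∈ ℕ}`. -/
theorem superADP_no_countable_weak_pi_base {X : Type*} [NormedAddCommGroup X]
    [NormedSpace ℝ X] [CompleteSpace X] (hdim : ¬ FiniteDimensional ℝ X)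
    (hSADP : ∀ x : X, ‖x‖ = 1 → ∀ W : Set X, RelWeakOpen (closedBall (0 : X) 1) W →
      W.Nonempty → ∀ ε > (0 : ℝ), ∃ y ∈ W, 2 - ε < max ‖x + y‖ ‖x - y‖)
    (V : ℕ → Set X)
    (hV : ∀ n, RelWeakOpen (closedBall (0 : X) 1) (V n) ∧ (V n).Nonempty) :
    ∃ v : ℕ → X, (∀ n, v n ∈ V n) ∧
      (0 : X) ∉ closure (X := WeakSpace ℝ X) (Set.range v) := by
  classical
  -- elements of `V n` have norm at most 1
  have hVnorm : ∀ n, ∀ y ∈ V n, ‖y‖ ≤ 1 := by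
    intro n y hy
    obtain ⟨U, _, hU⟩ := (hV n).1
    rw [hU] at hy
    simpa [mem_closedBall, dist_zero_right] using hy.1
  -- X is nontrivial, so there is a unit vector
  have hnt : Nontrivial X := by
    rcases subsingleton_or_nontrivial X with hs | hn
    · exact absurd (Module.Finite.of_basis (Module.Basis.empty X (ι := Fin 0))) hdim
    · exact hn
  obtain ⟨x₀, hx₀ne⟩ := exists_ne (0 : X)
  have hx₀ : ‖(‖x₀‖⁻¹ • x₀ : X)‖ = 1 := by
    rw [norm_smul, norm_inv, norm_norm]
    field_simp [norm_ne_zero_iff.mpr hx₀ne]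
  -- base step: a vector in `V 0` of norm > 3/4
  obtain ⟨v₀, hv₀V, hv₀⟩ : ∃ y ∈ V 0, (3 : ℝ)/4 < ‖y‖ := by
    obtain ⟨y, hyV, hy⟩ :=
      hSADP _ hx₀ (V 0) (hV 0).1 (hV 0).2 (4⁻¹) (by norm_num)
    refine ⟨y, hyV, ?_⟩
    rcases max_cases ‖(‖x₀‖⁻¹ • x₀ : X) + y‖ ‖(‖x₀‖⁻¹ • x₀ : X) - y‖ with ⟨he, _⟩ | ⟨he, _⟩ <;>
        rw [he] at hy
    · have h1 := norm_add_le ((‖x₀‖⁻¹ • x₀ : X)) y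
      rw [hx₀] at h1; linarith
    · have h1 := norm_sub_le ((‖x₀‖⁻¹ • x₀ : X)) y
      rw [hx₀] at h1; linarith
  -- the budget sequence
  set c : ℕ → ℝ := fun n => (1/2 : ℝ)^n / 4 with hc_def
  have hc_pos : ∀ n, 0 < c n := fun n => by positivity
  have hc_succ : ∀ n, c n = 2 * c (n+1) := by
    intro n; simp only [hc_def, pow_succ]; ring
  -- the invariant
  set Inv : ℕ → X → Prop := fun n u => ((n : ℝ) + 1/2 + c n < ‖u‖ ∧ ‖u‖ ≤ (n : ℝ) + 1)
    with hInv_def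
  -- inductive step
  have step : ∀ (n : ℕ) (u : X), ∃ p : X × X, p.2 ∈ V (n+1) ∧
      (p.1 = u + p.2 ∨ p.1 = u - p.2) ∧ (Inv n u → Inv (n+1) p.1) := by
    intro n u
    by_cases hu : Inv n u
    · obtain ⟨hu1, hu2⟩ := hu
      have ha : (0 : ℝ) < ‖u‖ := by
        have := hc_pos n
        have : (0:ℝ) ≤ (n:ℝ) := Nat.cast_nonneg n
        linarith [hc_pos n]
      set a := ‖u‖ with ha_def
      set x := a⁻¹ • u with hx_def
      have hx : ‖x‖ = 1 := by
        rw [hx_def, norm_smul, norm_inv, Real.norm_eq_abs, abs_of_pos ha, ← ha_def]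
        field_simp
      set ε := c (n+1) / (n+2) with hε_def
      have hε : 0 < ε := by
        apply div_pos (hc_pos (n+1))
        positivity
      have hεc : ε * ((n : ℝ) + 1) ≤ c (n+1) := by
        rw [hε_def]
        rw [div_mul_eq_mul_div, div_le_iff₀ (by positivity)]
        have : (0:ℝ) < c (n+1) := hc_pos (n+1)
        nlinarith [Nat.cast_nonneg (α := ℝ) n]
      have hεc' : ε ≤ c (n+1) := by
        have h1 : ε * 1 ≤ ε * ((n:ℝ)+1) := by
          apply mul_le_mul_of_nonneg_left _ hε.le
          linarith [Nat.cast_nonneg (α := ℝ) n]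
        simpa using h1.trans hεc
      obtain ⟨y, hyV, hy⟩ := hSADP x hx (V (n+1)) (hV (n+1)).1 (hV (n+1)).2 ε hε
      have hy1 : ‖y‖ ≤ 1 := hVnorm _ _ hyV
      -- the key estimate, for `w = y` or `w = -y`
      have key : ∀ w : X, ‖w‖ ≤ 1 → 2 - ε < ‖x + w‖ → Inv (n+1) (u + w) := by
        intro w hw hxw
        have hupper : ‖u + w‖ ≤ (n : ℝ) + 2 := by
          calc ‖u + w‖ ≤ ‖u‖ + ‖w‖ := norm_add_le u w
            _ ≤ (n:ℝ) + 1 + 1 := by rw [← ha_def]; linarith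
            _ = (n:ℝ) + 2 := by ring
        constructor
        swap
        · push_cast; linarith
        push_cast
        rcases le_or_gt 1 a with hcase | hcase
        · -- `a ≥ 1`: scale
          have e : u + w = a • (x + w) + (1 - a) • w := by
            rw [hx_def, smul_add, smul_inv_smul₀ ha.ne', sub_smul, one_smul]
            abel
          have h3 : ‖a • (x + w)‖ - ‖(1 - a) • w‖ ≤ ‖a • (x + w) + (1 - a) • w‖ := by
            simpa using norm_sub_norm_le (a • (x + w)) (-((1 - a) • w))
          rw [← e] at h3
          have h4 : a * ‖x + w‖ - (a - 1) * ‖w‖ ≤ ‖u + w‖ := by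
            have : ‖a • (x + w)‖ = a * ‖x + w‖ := by
              rw [norm_smul, Real.norm_eq_abs, abs_of_pos ha]
            rw [this] at h3
            have h5 : ‖(1 - a) • w‖ = (a - 1) * ‖w‖ := by
              rw [norm_smul, Real.norm_eq_abs, abs_of_nonpos (by linarith)]
              ring
            rw [h5] at h3
            exact h3
          have h6 : a * (2 - ε) - (a - 1) ≤ ‖u + w‖ := by
            have hws : (a - 1) * ‖w‖ ≤ (a - 1) * 1 := by
              apply mul_le_mul_of_nonneg_left hw (by linarith)
            nlinarith
          have hεa : ε * a ≤ c (n+1) := by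
            have : ε * a ≤ ε * ((n:ℝ)+1) :=
              mul_le_mul_of_nonneg_left hu2 hε.le
            linarith
          have hcn := hc_succ n
          nlinarith [hu1]
        · -- `a < 1`: translate
          have e : u + w = (x + w) + (a - 1) • x := by
            rw [hx_def, sub_smul, one_smul, smul_inv_smul₀ ha.ne']
            abel
          have h3 : ‖x + w‖ - ‖(a - 1) • x‖ ≤ ‖(x + w) + (a - 1) • x‖ := by
            simpa using norm_sub_norm_le (x + w) (-((a - 1) • x))
          rw [← e] at h3
          have h5 : ‖(a - 1) • x‖ = 1 - a := by
            rw [norm_smul, Real.norm_eq_abs, abs_of_neg (by linarith), hx]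
            ring
          rw [h5] at h3
          have hcn := hc_succ n
          nlinarith [hu1]
      rcases lt_max_iff.mp hy with hcase | hcase
      · exact ⟨(u + y, y), hyV, Or.inl rfl, fun _ => key y hy1 hcase⟩
      · refine ⟨(u - y, y), hyV, Or.inr rfl, fun _ => ?_⟩
        have := key (-y) (by simpa using hy1) (by simpa [sub_eq_add_neg] using hcase)
        simpa [sub_eq_add_neg] using this
    · obtain ⟨y, hy⟩ := (hV (n+1)).2
      exact ⟨(u + y, y), hy, Or.inl rfl, fun h => absurd h hu⟩
  choose F hF1 hF2 hF3 using step
  -- the recursive sequence: `seq n = (u n, v n)` where `u n = θ₀ v 0 + ⋯ + θₙ v n`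
  set seq : ℕ → X × X := fun n => Nat.rec ((v₀, v₀) : X × X) (fun n p => F n p.1) n
    with hseq_def
  set u : ℕ → X := fun n => (seq n).1 with hu_def
  set v : ℕ → X := fun n => (seq n).2 with hv_def
  have hseqS : ∀ n, seq (n+1) = F n (u n) := fun n => rfl
  have hvV : ∀ n, v n ∈ V n := by
    intro n
    cases n with
    | zero => exact hv₀V
    | succ n =>
      have hvn : v (n+1) = (F n (u n)).2 := rfl
      rw [hvn]; exact hF1 n (u n)
  have hrel : ∀ n, u (n+1) = u n + v (n+1) ∨ u (n+1) = u n - v (n+1) := by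
    intro n
    have h1 : u (n+1) = (F n (u n)).1 := rfl
    have h2 : v (n+1) = (F n (u n)).2 := rfl
    rw [h1, h2]
    exact hF2 n (u n)
  have hInv : ∀ n, Inv n (u n) := by
    intro n
    induction n with
    | zero =>
      constructor
      · have : c 0 = 1/4 := by norm_num [hc_def]
        rw [this]
        have : u 0 = v₀ := rfl
        rw [this]
        push_cast
        linarith
      · have : u 0 = v₀ := rfl
        rw [this]
        push_cast
        linarith [hVnorm 0 v₀ hv₀V]
    | succ n ih =>
      have h1 : u (n+1) = (F n (u n)).1 := rfl
      rw [h1]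
      exact hF3 n (u n) ih
  have hv1 : ∀ n, ‖v n‖ ≤ 1 := fun n => hVnorm n (v n) (hvV n)
  -- norming functionals
  have hu_pos : ∀ n : ℕ, (n : ℝ) + 1/2 < ‖u n‖ := by
    intro n
    have := (hInv n).1
    linarith [hc_pos n]
  have hu_ne : ∀ n, u n ≠ 0 := by
    intro n h
    have := hu_pos n
    rw [h, norm_zero] at this
    have : (0:ℝ) ≤ (n:ℝ) := Nat.cast_nonneg n
    linarith [hu_pos n, (Nat.cast_nonneg (α := ℝ) n)]
  have hfn : ∀ n, ∃ g : StrongDual ℝ X, ‖g‖ = 1 ∧ g (u n) = ‖u n‖ :=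
    fun n => exists_dual_vector ℝ (u n) (norm_ne_zero_iff.mpr (hu_ne n))
  choose f hf1 hf2 using hfn
  -- key estimate on the functionals
  have habs : ∀ n, ∀ z : X, ‖z‖ ≤ 1 → |f n z| ≤ 1 := by
    intro n z hz
    have := (f n).le_opNorm z
    rw [hf1 n] at this
    calc |f n z| = ‖f n z‖ := (Real.norm_eq_abs _).symm
      _ ≤ 1 * ‖z‖ := by simpa using this
      _ ≤ 1 := by simpa using hz
  have hchain : ∀ m i k : ℕ, f m (u (i + k)) ≤ f m (u i) + k := by
    intro m i k
    induction k with
    | zero => simp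
    | succ k ih =>
      have hb : |f m (v (i + k + 1))| ≤ 1 := habs m (v (i+k+1)) (hv1 (i+k+1))
      rcases hrel (i + k) with h | h
      · have : u (i + k + 1) = u (i+k) + v (i+k+1) := h
        rw [show i + (k+1) = (i + k) + 1 from rfl, this, map_add]
        have := abs_le.mp hb
        push_cast
        linarith
      · have : u (i + k + 1) = u (i+k) - v (i+k+1) := h
        rw [show i + (k+1) = (i + k) + 1 from rfl, this, map_sub]
        have := abs_le.mp hb
        push_cast
        linarith
  have hstart : ∀ m i : ℕ, f m (u i) ≤ (i : ℝ) + |f m (v i)| := by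
    intro m i
    cases i with
    | zero =>
      have : u 0 = v 0 := rfl
      rw [this]
      push_cast
      linarith [le_abs_self (f m (v 0))]
    | succ i =>
      have hb : |f m (u i)| ≤ ‖u i‖ := by
        have := (f m).le_opNorm (u i)
        rw [hf1 m] at this
        calc |f m (u i)| = ‖f m (u i)‖ := (Real.norm_eq_abs _).symm
          _ ≤ ‖u i‖ := by simpa using this
      rcases hrel i with h | h
      · rw [h, map_add]
        have h1 := (abs_le.mp hb).2
        have h2 := le_abs_self (f m (v (i+1)))
        have h3 := (hInv i).2
        push_cast
        linarith
      · rw [h, map_sub]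
        have h1 := (abs_le.mp hb).2
        have h2 := neg_abs_le (f m (v (i+1)))
        have h3 := (hInv i).2
        push_cast
        linarith
  have key2 : ∀ n i : ℕ, i ≤ n → (1:ℝ)/2 < |f n (v i)| := by
    intro n i hin
    obtain ⟨k, rfl⟩ := Nat.exists_eq_add_of_le hin
    have h1 : f (i+k) (u (i + k)) ≤ f (i+k) (u i) + k := hchain (i+k) i k
    have h2 : f (i+k) (u i) ≤ (i : ℝ) + |f (i+k) (v i)| := hstart (i+k) i
    have h3 : ((i:ℝ) + k) + 1/2 < ‖u (i+k)‖ := by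
      have := hu_pos (i+k); push_cast at this ⊢; linarith
    have h4 : f (i+k) (u (i+k)) = ‖u (i+k)‖ := hf2 (i+k)
    linarith
  -- weak* cluster point of the functionals
  set fw : ℕ → WeakDual ℝ X := fun n => StrongDual.toWeakDual (f n) with hfw_def
  have hK : IsCompact (WeakDual.toStrongDual ⁻¹' closedBall (0 : StrongDual ℝ X) 1 :
      Set (WeakDual ℝ X)) := WeakDual.isCompact_closedBall (𝕜 := ℝ) 0 1
  have hmem : ∀ n, fw n ∈ (WeakDual.toStrongDual ⁻¹' closedBall (0 : StrongDual ℝ X) 1 :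
      Set (WeakDual ℝ X)) := by
    intro n
    simp only [Set.mem_preimage, mem_closedBall, dist_zero_right]
    exact le_of_eq (hf1 n)
  have hle0 : map fw atTop ≤ 𝓟 (WeakDual.toStrongDual ⁻¹' closedBall (0 : StrongDual ℝ X) 1 :
      Set (WeakDual ℝ X)) := by
    rw [le_principal_iff, mem_map]
    exact Eventually.of_forall hmem
  obtain ⟨g, -, hg⟩ := hK.exists_clusterPt (f := map fw atTop) hle0
  -- the cluster point separates 0 from the range of v
  have hgv : ∀ i, (1:ℝ)/2 ≤ |g (v i)| := by
    intro i
    have hev : Continuous fun h : WeakDual ℝ X => h (v i) := WeakDual.eval_continuous (v i)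
    have htend : Tendsto (fun h : WeakDual ℝ X => h (v i)) (map fw atTop)
        (map (fun n => fw n (v i)) atTop) := by
      rw [Tendsto, Filter.map_map]
      exact le_rfl
    have hcp : ClusterPt (g (v i)) (map (fun n => fw n (v i)) atTop) :=
      hg.map hev.continuousAt htend
    have hle : map (fun n => fw n (v i)) atTop ≤ 𝓟 {t : ℝ | (1:ℝ)/2 ≤ |t|} := by
      rw [le_principal_iff, mem_map]
      filter_upwards [eventually_ge_atTop i] with n hn
      exact (key2 n i hn).le
    have hmemcl : g (v i) ∈ closure {t : ℝ | (1:ℝ)/2 ≤ |t|} :=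
      mem_closure_iff_clusterPt.mpr (hcp.mono hle)
    have hcl : IsClosed {t : ℝ | (1:ℝ)/2 ≤ |t|} := isClosed_Ici.preimage continuous_abs
    rwa [hcl.closure_eq] at hmemcl
  refine ⟨v, hvV, ?_⟩
  intro h0
  have hgc : Continuous fun x : WeakSpace ℝ X => (topDualPairing ℝ X).flip x
      (WeakDual.toStrongDual g) := WeakBilin.eval_continuous _ _
  set O : Set (WeakSpace ℝ X) :=
    (fun x : WeakSpace ℝ X => (topDualPairing ℝ X).flip x (WeakDual.toStrongDual g)) ⁻¹'
      {t : ℝ | |t| < 1/2} with hO_def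
  have hOopen : IsOpen O := by
    apply (isOpen_lt continuous_abs continuous_const).preimage hgc
  have h0O : (0 : WeakSpace ℝ X) ∈ O := by
    simp [hO_def]
    convert (show |(0:ℝ)| < 2⁻¹ by norm_num) using 2
    exact map_zero (WeakDual.toStrongDual g)
  obtain ⟨z, hzO, hzr⟩ := (_root_.mem_closure_iff (X := WeakSpace ℝ X)).mp h0 O hOopen h0O
  obtain ⟨i, rfl⟩ := hzr
  have : (topDualPairing ℝ X).flip (toWeakSpace ℝ X (v i)) (WeakDual.toStrongDual g)
      = g (v i) := rfl
  rw [hO_def] at hzO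
  have : |g (v i)| < 1/2 := hzO
  linarith [hgv i]
end

section
/- Let X_T be the binary tree space. A point x in the unit sphere of X_T is a strongly exposed point of the closed unit ball B_{X_T} if and only if there exists a finite maximal antichain α of the binary tree T such that |x(s)| = 1 for every s ∈ α. Consequently, the extreme points of B_{X_T} coincide with its strongly exposed points. -/
open Metric Filter Topology

/-- Nodes of the infinite binary tree: finite sequences over `{0,1}`. -/
abbrev TreeNode := List Bool

/-- A finite set of nodes is a chain if its elements are pairwise comparable for the
initial-segment (prefix) order. -/
def IsFinChain (A : Finset TreeNode) : Prop := ∀ s ∈ A, ∀ t ∈ A, s <+: t ∨ t <+: s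

/-- A set of nodes is a chain if its elements are pairwise comparable. -/
def IsSetChain (A : Set TreeNode) : Prop := ∀ s ∈ A, ∀ t ∈ A, s <+: t ∨ t <+: s

/-- A branch is a maximal chain of the binary tree. -/
def IsBranch (β : Set TreeNode) : Prop :=
  IsSetChain β ∧ ∀ γ : Set TreeNode, IsSetChain γ → β ⊆ γ → γ = β

/-- A set of nodes is an antichain if its elements are pairwise incomparable. -/
def IsTreeAntichain (A : Set TreeNode) : Prop :=
  ∀ s ∈ A, ∀ t ∈ A, s ≠ t → ¬ s <+: t ∧ ¬ t <+: s

/-- The binary tree norm of a finitely supported function on the tree: the supremum over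
chains `A` of `∑_{t ∈ A} |c t|`. -/
noncomputable def treeNorm (c : TreeNode →₀ ℝ) : ℝ :=
  sSup {r | ∃ A : Finset TreeNode, IsFinChain A ∧ r = ∑ t ∈ A, |c t|}

/-- `x` is a strongly exposed point of `A`: there is a functional attaining its supremum over
`A` at `x` such that every sequence in `A` whose values converge to `f x` converges to `x`
in norm. -/
def StronglyExposedPoint {X : Type*} [NormedAddCommGroup X] [NormedSpace ℝ X]
    (A : Set X) (x : X) : Prop :=
  x ∈ A ∧ ∃ f : X →L[ℝ] ℝ, (∀ y ∈ A, f y ≤ f x) ∧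
    ∀ xn : ℕ → X, (∀ n, xn n ∈ A) →
      Tendsto (fun n => f (xn n)) atTop (𝓝 (f x)) → Tendsto xn atTop (𝓝 x)

namespace BTaux

lemma prefix_total {p q r : TreeNode} (h1 : p <+: r) (h2 : q <+: r) : p <+: q ∨ q <+: p :=
  List.prefix_or_prefix_of_prefix h1 h2

lemma finchain_subset {A B : Finset TreeNode} (h : IsFinChain A) (hBA : B ⊆ A) :
    IsFinChain B := fun s hs t ht => h s (hBA hs) t (hBA ht)

lemma finchain_singleton (t : TreeNode) : IsFinChain {t} := by
  intro s hs u hu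
  simp only [Finset.mem_singleton] at hs hu
  subst hs hu; exact Or.inl (List.prefix_refl _)

/-- a nonempty finite chain has a top element -/
lemma exists_top {A : Finset TreeNode} (hA : IsFinChain A) (hne : A.Nonempty) :
    ∃ m ∈ A, ∀ u ∈ A, u <+: m := by
  obtain ⟨m, hm, hmax⟩ := A.exists_max_image (fun t => t.length) hne
  refine ⟨m, hm, fun u hu => ?_⟩
  rcases hA u hu m hm with h | h
  · exact h
  · have hlen : m.length = u.length := le_antisymm h.length_le (hmax u hu)
    rw [h.eq_of_length hlen]

/-- insert a node comparable to the top into a chain -/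
lemma finchain_insert {A : Finset TreeNode} (hA : IsFinChain A) {m : TreeNode}
    (hm : ∀ u ∈ A, u <+: m) {s : TreeNode} (hs : s <+: m ∨ m <+: s) :
    IsFinChain (insert s A) := by
  intro u hu v hv
  simp only [Finset.mem_insert] at hu hv
  rcases hu with rfl | hu
  · rcases hv with rfl | hv
    · exact Or.inl (List.prefix_refl _)
    · rcases hs with h | h
      · exact (prefix_total h (hm v hv)).symm.imp id id |>.symm
      · exact Or.inr ((hm v hv).trans h)
  · rcases hv with rfl | hv
    · rcases hs with h | h
      · exact prefix_total (hm u hu) h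
      · exact Or.inl ((hm u hu).trans h)
    · exact hA u hu v hv




lemma strict_prefix_cons {r t : TreeNode} (h : r <+: t) (hne : t ≠ r) :
    ∃ u : TreeNode, ∃ b : Bool, r <+: u ∧ u ++ [b] = t ∧ u.length + 1 = t.length := by
  obtain ⟨l, rfl⟩ := h
  have hl : l ≠ [] := by rintro rfl; simp at hne
  refine ⟨r ++ l.dropLast, l.getLast hl, ⟨l.dropLast, rfl⟩, ?_, ?_⟩
  · rw [List.append_assoc, List.dropLast_append_getLast hl]
  · have : l.length ≠ 0 := fun h0 => hl (List.length_eq_zero_iff.mp h0)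
    simp [List.length_dropLast]
    omega

/-- minimal `S`-ancestors exist -/
lemma exists_min_anc (S : Set TreeNode) (r : TreeNode) :
    ∀ n : ℕ, ∀ u : TreeNode, u.length ≤ n → r <+: u → u ≠ r → u ∈ S →
      ∃ q, (r <+: q ∧ q ≠ r ∧ q ∈ S ∧
        ∀ p, r <+: p → p <+: q → p ≠ r → p ≠ q → p ∉ S) ∧ q <+: u := by
  intro n
  induction n with
  | zero =>
    intro u hlen hru hne hS
    exfalso
    have : u = [] := List.length_eq_zero_iff.mp (Nat.le_zero.mp hlen)
    subst this
    exact hne (List.eq_nil_of_prefix_nil hru ▸ rfl)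
  | succ n ih =>
    intro u hlen hru hne hS
    by_cases hmin : ∀ p, r <+: p → p <+: u → p ≠ r → p ≠ u → p ∉ S
    · exact ⟨u, ⟨hru, hne, hS, hmin⟩, List.prefix_refl u⟩
    · push_neg at hmin
      obtain ⟨p, h1, h2, h3, h4, h5⟩ := hmin
      have hplen : p.length ≤ n := by
        have := h2.length_le
        have : p.length ≠ u.length := fun hl => h4 (h2.eq_of_length hl)
        omega
      obtain ⟨q, hq, hqp⟩ := ih p hplen h1 h3 h5
      exact ⟨q, hq, hqp.trans h2⟩

/-- König-type lemma: if below `r` there is no finite relatively-maximal antichain of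
`S`-nodes, then there is an infinite branch through `r` avoiding `S` strictly beyond `r`. -/
lemma konig (S : Set TreeNode) (r : TreeNode)
    (h : ¬ ∃ β : Finset TreeNode, (∀ s ∈ β, r <+: s ∧ s ≠ r ∧ s ∈ S) ∧
      IsTreeAntichain (↑β : Set TreeNode) ∧
      ∀ t : TreeNode, r <+: t → t ≠ r → ∃ s ∈ β, s <+: t ∨ t <+: s) :
    ∃ g : ℕ → TreeNode, g 0 = r ∧ (∀ n, ∃ b : Bool, g (n + 1) = g n ++ [b]) ∧
      ∀ n, g (n + 1) ∉ S := by
  classical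
  set U : Set TreeNode := {t | r <+: t ∧ ∀ p, r <+: p → p <+: t → p ≠ r → p ∉ S} with hU
  have hrU : r ∈ U := ⟨List.prefix_refl r, fun p h1 h2 hne => absurd (h1.eq_of_length
    (le_antisymm h1.length_le h2.length_le)).symm hne⟩
  have hUclosed : ∀ t ∈ U, ∀ w, r <+: w → w <+: t → w ∈ U := by
    rintro t ⟨htr, ht⟩ w hrw hwt
    exact ⟨hrw, fun p h1 h2 hne => ht p h1 (h2.trans hwt) hne⟩
  -- U is infinite
  have hUinf : U.Infinite := by
    by_contra hfin
    simp only [Set.not_infinite] at hfin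
    set M : Set TreeNode := {t | r <+: t ∧ t ≠ r ∧ t ∈ S ∧
      ∀ p, r <+: p → p <+: t → p ≠ r → p ≠ t → p ∉ S} with hM
    have hMsub : M ⊆ (fun q : TreeNode × Bool => q.1 ++ [q.2]) '' (U ×ˢ (Set.univ : Set Bool)) := by
      rintro t ⟨htr, htne, htS, htmin⟩
      obtain ⟨u, b, hru, hub, hlen⟩ := strict_prefix_cons htr htne
      refine ⟨⟨u, b⟩, ⟨⟨hru, fun p h1 h2 hne => ?_⟩, trivial⟩, hub⟩
      have h2' : p <+: u := h2
      have hpt : p <+: t := by rw [← hub]; exact h2'.trans ⟨[b], rfl⟩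
      refine htmin p h1 hpt hne ?_
      intro hpt'
      have e1 := h2'.length_le
      have := hpt'  ▸ hlen
      omega
    have hMfin : M.Finite := Set.Finite.subset ((hfin.prod Set.finite_univ).image _) hMsub
    apply h
    refine ⟨hMfin.toFinset, ?_, ?_, ?_⟩
    · intro s hs
      rw [Set.Finite.mem_toFinset] at hs
      exact ⟨hs.1, hs.2.1, hs.2.2.1⟩
    · intro s hs t ht hne
      rw [Set.Finite.coe_toFinset] at hs ht
      constructor
      · intro hst
        exact ht.2.2.2 s hs.1 hst hs.2.1 hne hs.2.2.1
      · intro hts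
        exact hs.2.2.2 t ht.1 hts ht.2.1 (Ne.symm hne) ht.2.2.1
    · -- covering
      intro t hrt htne
      have key : ∃ u, r <+: u ∧ u ≠ r ∧ u ∈ S ∧ (u <+: t ∨ t <+: u) := by
        by_cases hanc : ∃ p, r <+: p ∧ p <+: t ∧ p ≠ r ∧ p ∈ S
        · obtain ⟨p, h1, h2, h3, h4⟩ := hanc
          exact ⟨p, h1, h3, h4, Or.inl h2⟩
        · push_neg at hanc
          have htU : t ∈ U := ⟨hrt, fun p h1 h2 hne => hanc p h1 h2 hne⟩
          by_cases hdesc : ∃ u, t <+: u ∧ u ∈ S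
          · obtain ⟨u, h1, h2⟩ := hdesc
            refine ⟨u, hrt.trans h1, fun hur => ?_, h2, Or.inr h1⟩
            · subst hur
              exact htne (hrt.eq_of_length (le_antisymm hrt.length_le h1.length_le)).symm
          · push_neg at hdesc
            exfalso
            have : U.Infinite := by
              apply Set.infinite_of_injective_forall_mem
                (f := fun n : ℕ => t ++ List.replicate n true)
              · intro a b hab
                simpa using congrArg List.length hab
              · intro n
                refine ⟨hrt.trans ⟨List.replicate n true, rfl⟩, ?_⟩
                intro p h1 h2 hne
                -- p is comparable to t
                rcases prefix_total (r := t ++ List.replicate n true) h2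
                  ⟨List.replicate n true, rfl⟩ with hc | hc
                · exact htU.2 p h1 hc hne
                · exact hdesc p hc
            exact this hfin
      obtain ⟨u, h1, h2, h3, h4⟩ := key
      obtain ⟨q, hq, hqu⟩ := exists_min_anc S r u.length u le_rfl h1 h2 h3
      refine ⟨q, ?_, ?_⟩
      · rw [Set.Finite.mem_toFinset]; exact hq
      · rcases h4 with h4 | h4
        · exact Or.inl (hqu.trans h4)
        · exact prefix_total hqu h4
  -- branch construction
  have step : ∀ t : TreeNode, (t ∈ U ∧ {u ∈ U | t <+: u}.Infinite) →
      ∃ b : Bool, (t ++ [b]) ∈ U ∧ {u ∈ U | t ++ [b] <+: u}.Infinite := by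
    rintro t ⟨htU, hinf⟩
    have hsub : {u ∈ U | t <+: u} ⊆
        insert t ({u ∈ U | t ++ [true] <+: u} ∪ {u ∈ U | t ++ [false] <+: u}) := by
      rintro u ⟨huU, htu⟩
      by_cases hut : u = t
      · simp [hut]
      · obtain ⟨l, rfl⟩ := htu
        have hl : l ≠ [] := by rintro rfl; simp at hut
        have hpre : t ++ [l.head hl] <+: t ++ l := by
          refine ⟨l.tail, ?_⟩
          rw [List.append_assoc]
          congr 1
          exact List.cons_head_tail hl
        right
        cases hb : l.head hl
        · right; exact ⟨huU, by rwa [hb] at hpre⟩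
        · left; exact ⟨huU, by rwa [hb] at hpre⟩
    by_contra hcon
    push_neg at hcon
    have hfin : ∀ b : Bool, ¬ {u ∈ U | t ++ [b] <+: u}.Infinite := by
      intro b hbinf
      have hmem : (t ++ [b]) ∈ U := by
        obtain ⟨u, huU, hpre⟩ := hbinf.nonempty
        exact hUclosed u huU (t ++ [b]) (htU.1.trans ⟨[b], rfl⟩) hpre
      exact hbinf (hcon b hmem)
    simp only [Set.not_infinite] at hfin
    have : ({u ∈ U | t <+: u}).Finite :=
      Set.Finite.subset (Set.Finite.insert t ((hfin true).union (hfin false))) hsub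
    exact hinf this
  choose bit hbit1 hbit2 using step
  let g : ℕ → PSigma fun t : TreeNode => t ∈ U ∧ {u ∈ U | t <+: u}.Infinite := fun n =>
    Nat.rec ⟨r, hrU, hUinf.mono (fun u hu => ⟨hu, hu.1⟩)⟩
      (fun _ p => ⟨p.1 ++ [bit p.1 p.2], hbit1 p.1 p.2, hbit2 p.1 p.2⟩) n
  refine ⟨fun n => (g n).1, rfl, fun n => ⟨bit (g n).1 (g n).2, rfl⟩, ?_⟩
  have hlen : ∀ n, (g n).1.length = r.length + n := by
    intro n
    induction n with
    | zero => rfl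
    | succ n ih =>
      show ((g n).1 ++ [bit (g n).1 (g n).2]).length = _
      simp [ih]
      omega
  intro n hS
  have hmem : (g (n + 1)).1 ∈ U := (g (n + 1)).2.1
  refine hmem.2 (g (n + 1)).1 hmem.1 (List.prefix_refl _) ?_ hS
  intro he
  have h1 := congrArg List.length he
  have h2 := hlen (n + 1)
  omega


lemma finchain_empty : IsFinChain ∅ := by intro s hs; simp at hs

/-- the sign function used for alignment -/
noncomputable def sg (r : ℝ) : ℝ := if r < 0 then -1 else 1

lemma sg_mul_self (r : ℝ) : sg r * r = |r| := by
  rw [sg]; split_ifs with h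
  · rw [abs_of_neg h]; ring
  · rw [abs_of_nonneg (not_lt.mp h)]; ring

lemma abs_sg (r : ℝ) : |sg r| = 1 := by
  rw [sg]; split_ifs <;> simp

section Main
variable {X : Type*} [NormedAddCommGroup X] [NormedSpace ℝ X]
  (e : TreeNode → X) (coord : TreeNode → X →L[ℝ] ℝ)

noncomputable def Phi (c : TreeNode →₀ ℝ) : X := c.sum fun t a => a • e t

variable (hnorm : ∀ c : TreeNode →₀ ℝ, ‖Phi e c‖ = treeNorm c)
  (hdense : DenseRange (Phi e))
  (hcoord : ∀ s t, coord s (e t) = if s = t then 1 else 0)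

include hcoord in
lemma coordPhi (c : TreeNode →₀ ℝ) (s : TreeNode) : coord s (Phi e c) = c s := by
  classical
  rw [Phi, Finsupp.sum, map_sum]
  simp only [map_smul, hcoord, smul_eq_mul, mul_ite, mul_one, mul_zero]
  rw [Finset.sum_ite_eq]
  split_ifs with h
  · rfl
  · exact (Finsupp.notMem_support_iff.mp h).symm

lemma treeNorm_bdd (c : TreeNode →₀ ℝ) :
    BddAbove {r | ∃ A : Finset TreeNode, IsFinChain A ∧ r = ∑ t ∈ A, |c t|} := by
  classical
  refine ⟨∑ t ∈ c.support, |c t|, ?_⟩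
  rintro r ⟨A, hA, rfl⟩
  rw [show ∑ t ∈ A, |c t| = ∑ t ∈ A ∩ c.support, |c t| from
    (Finset.sum_subset Finset.inter_subset_left (fun x hx hx2 => by
      simp only [Finset.mem_inter, not_and] at hx2
      simp [Finsupp.notMem_support_iff.mp (fun hs => hx2 hx hs)])).symm]
  exact Finset.sum_le_sum_of_subset_of_nonneg Finset.inter_subset_right
    (fun _ _ _ => abs_nonneg _)

lemma chainSum_le_treeNorm (c : TreeNode →₀ ℝ) {A : Finset TreeNode} (hA : IsFinChain A) :
    ∑ t ∈ A, |c t| ≤ treeNorm c :=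
  le_csSup (treeNorm_bdd c) ⟨A, hA, rfl⟩

lemma treeNorm_nonneg (c : TreeNode →₀ ℝ) : 0 ≤ treeNorm c := by
  have := chainSum_le_treeNorm c finchain_empty
  simpa using this

include hnorm hdense hcoord in
/-- L1: chain sums of coordinates are dominated by the norm -/
lemma chainSum_le_norm {A : Finset TreeNode} (hA : IsFinChain A) (z : X) :
    ∑ t ∈ A, |coord t z| ≤ ‖z‖ := by
  classical
  set g : X →L[ℝ] ℝ := ∑ t ∈ A, sg (coord t z) • coord t with hg
  have happ : ∀ y, g y = ∑ t ∈ A, sg (coord t z) * coord t y := by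
    intro y
    rw [hg]
    simp [ContinuousLinearMap.sum_apply, ContinuousLinearMap.smul_apply, smul_eq_mul]
  have hrange : ∀ y ∈ Set.range (Phi e), g y ≤ ‖y‖ := by
    rintro y ⟨c, rfl⟩
    rw [happ, hnorm]
    calc ∑ t ∈ A, sg (coord t z) * coord t (Phi e c)
        ≤ ∑ t ∈ A, |c t| := by
          refine Finset.sum_le_sum fun t _ => ?_
          rw [coordPhi e coord hcoord]
          calc sg (coord t z) * c t ≤ |sg (coord t z) * c t| := le_abs_self _
            _ = |c t| := by rw [abs_mul, abs_sg, one_mul]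
      _ ≤ treeNorm c := chainSum_le_treeNorm c hA
  have hclosed : IsClosed {y : X | g y ≤ ‖y‖} := isClosed_le g.continuous continuous_norm
  have hall : ∀ y, g y ≤ ‖y‖ := by
    intro y
    have h1 : closure (Set.range (Phi e)) ⊆ {y : X | g y ≤ ‖y‖} :=
      hclosed.closure_subset_iff.mpr hrange
    have h2 : y ∈ closure (Set.range (Phi e)) := by
      rw [hdense.closure_range]; trivial
    exact h1 h2
  have := hall z
  rwa [happ, Finset.sum_congr rfl (fun t _ => sg_mul_self (coord t z))] at this

include hnorm hdense hcoord in
/-- L2: the norm is dominated by any uniform bound on chain sums of coordinates -/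
lemma norm_le_of_chains (z : X) (b : ℝ)
    (hb : ∀ A : Finset TreeNode, IsFinChain A → ∑ t ∈ A, |coord t z| ≤ b) : ‖z‖ ≤ b := by
  refine le_of_forall_pos_le_add fun ε hε => ?_
  obtain ⟨c, hc⟩ := hdense.exists_dist_lt z (by positivity : (0:ℝ) < ε / 3)
  rw [dist_comm, dist_eq_norm] at hc
  have h1 : ‖z‖ ≤ treeNorm c + ε / 3 := by
    calc ‖z‖ ≤ ‖Phi e c‖ + ‖Phi e c - z‖ := by
          have := norm_add_le (Phi e c) (z - Phi e c)
          simp only [add_sub_cancel] at this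
          calc ‖z‖ ≤ ‖Phi e c‖ + ‖z - Phi e c‖ := this
            _ = ‖Phi e c‖ + ‖Phi e c - z‖ := by rw [norm_sub_rev]
      _ ≤ treeNorm c + ε / 3 := by rw [hnorm]; linarith
  have hne : Set.Nonempty {r | ∃ A : Finset TreeNode, IsFinChain A ∧ r = ∑ t ∈ A, |c t|} :=
    ⟨0, ∅, finchain_empty, by simp⟩
  obtain ⟨r, hrmem, hr⟩ := exists_lt_of_lt_csSup hne
    (show treeNorm c - ε / 3 < treeNorm c by linarith)
  obtain ⟨A, hA, rfl⟩ := hrmem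
  have h2 : ∑ t ∈ A, |c t| ≤ b + ε / 3 := by
    calc ∑ t ∈ A, |c t| ≤ ∑ t ∈ A, (|coord t z| + |coord t (Phi e c - z)|) := by
          refine Finset.sum_le_sum fun t _ => ?_
          rw [← coordPhi e coord hcoord c t]
          have h3 : coord t (Phi e c - z) = coord t (Phi e c) - coord t z := map_sub _ _ _
          have h4 := abs_sub_abs_le_abs_sub (coord t (Phi e c)) (coord t z)
          rw [← h3] at h4
          linarith
      _ = ∑ t ∈ A, |coord t z| + ∑ t ∈ A, |coord t (Phi e c - z)| := Finset.sum_add_distrib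
      _ ≤ b + ‖Phi e c - z‖ := add_le_add (hb A hA)
          (chainSum_le_norm e coord hnorm hdense hcoord hA _)
      _ ≤ b + ε / 3 := by linarith
  linarith

include hnorm in
lemma norm_e (t : TreeNode) : ‖e t‖ = 1 := by
  classical
  have h1 : Phi e (Finsupp.single t 1) = e t := by
    rw [Phi, Finsupp.sum_single_index (by simp), one_smul]
  have h2 : treeNorm (Finsupp.single t 1) = 1 := by
    refine le_antisymm (Real.sSup_le ?_ zero_le_one) ?_
    · rintro r ⟨A, hA, rfl⟩
      calc ∑ u ∈ A, |(Finsupp.single t 1) u| = ∑ u ∈ A, if t = u then (1:ℝ) else 0 := by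
            refine Finset.sum_congr rfl fun u _ => ?_
            rw [Finsupp.single_apply]
            split_ifs <;> simp
        _ = if t ∈ A then (1:ℝ) else 0 := Finset.sum_ite_eq A t (fun _ => (1:ℝ))
        _ ≤ 1 := by split_ifs <;> norm_num
    · refine le_csSup (treeNorm_bdd _) ⟨{t}, finchain_singleton t, ?_⟩
      simp
  rw [← h1, hnorm, h2]


lemma finchain_pair {s t : TreeNode} (h : s <+: t ∨ t <+: s) : IsFinChain {s, t} := by
  intro u hu v hv
  simp only [Finset.mem_insert, Finset.mem_singleton] at hu hv
  rcases hu with rfl | rfl <;> rcases hv with rfl | rfl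
  · exact Or.inl (List.prefix_refl _)
  · exact h
  · exact h.symm
  · exact Or.inl (List.prefix_refl _)

include hnorm hdense hcoord in
lemma coord_zero_off {x : X} (hx : ‖x‖ = 1) {α : Finset TreeNode}
    (hmax : ∀ t : TreeNode, ∃ s ∈ α, s <+: t ∨ t <+: s)
    (hone : ∀ s ∈ α, |coord s x| = 1) :
    ∀ t : TreeNode, t ∉ α → coord t x = 0 := by
  intro t ht
  obtain ⟨s, hs, hcomp⟩ := hmax t
  have hst : s ≠ t := fun h => ht (h ▸ hs)
  have hchain : IsFinChain {s, t} := finchain_pair hcomp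
  have hsum := chainSum_le_norm e coord hnorm hdense hcoord hchain x
  rw [Finset.sum_pair hst, hx] at hsum
  have h1 := hone s hs
  have h2 := abs_nonneg (coord t x)
  exact abs_eq_zero.mp (le_antisymm (by linarith) h2)

include hnorm hdense hcoord in
/-- key estimate: distance to `x` is controlled by coordinates on the antichain -/
lemma est {x : X} (hx : ‖x‖ = 1) {α : Finset TreeNode}
    (hanti : IsTreeAntichain (↑α : Set TreeNode))
    (hmax : ∀ t : TreeNode, ∃ s ∈ α, s <+: t ∨ t <+: s)
    (hone : ∀ s ∈ α, |coord s x| = 1)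
    {y : X} (hy : ‖y‖ ≤ 1) :
    ‖y - x‖ ≤ 2 * ∑ s ∈ α, |coord s y - coord s x| := by
  classical
  have hzero := coord_zero_off e coord hnorm hdense hcoord hx hmax hone
  set D := ∑ s ∈ α, |coord s y - coord s x| with hD
  have hDnn : 0 ≤ D := Finset.sum_nonneg fun s _ => abs_nonneg _
  have hterm : ∀ s ∈ α, |coord s y - coord s x| ≤ D := by
    intro s hs
    exact Finset.single_le_sum (f := fun u => |coord u y - coord u x|)
      (fun u _ => abs_nonneg _) hs
  refine norm_le_of_chains e coord hnorm hdense hcoord _ _ fun A hA => ?_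
  have hsub : ∀ t, coord t (y - x) = coord t y - coord t x := fun t => map_sub _ _ _
  by_cases hAα : ∃ s ∈ A, s ∈ α
  · obtain ⟨s, hsA, hsα⟩ := hAα
    have huniq : ∀ t ∈ A, t ≠ s → t ∉ α := by
      intro t htA htne htα
      rcases hA s hsA t htA with hc | hc
      · exact (hanti s hsα t htα (Ne.symm htne)).1 hc
      · exact (hanti s hsα t htα (Ne.symm htne)).2 hc
    rw [← Finset.add_sum_erase A _ hsA]
    have herase : ∑ t ∈ A.erase s, |coord t (y - x)| = ∑ t ∈ A.erase s, |coord t y| := by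
      refine Finset.sum_congr rfl fun t htA => ?_
      rw [hsub, hzero t (huniq t (Finset.mem_of_mem_erase htA) (Finset.ne_of_mem_erase htA)),
        sub_zero]
    rw [herase, hsub]
    have hcs := chainSum_le_norm e coord hnorm hdense hcoord hA y
    rw [← Finset.add_sum_erase A _ hsA] at hcs
    have hb : ∑ t ∈ A.erase s, |coord t y| ≤ 1 - |coord s y| := by linarith
    have h1 : (1:ℝ) - |coord s y| ≤ |coord s y - coord s x| := by
      have := abs_sub_abs_le_abs_sub (coord s x) (coord s y)
      rw [hone s hsα, abs_sub_comm] at this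
      linarith
    have h2 := hterm s hsα
    linarith
  · push_neg at hAα
    have hAy : ∑ t ∈ A, |coord t (y - x)| = ∑ t ∈ A, |coord t y| := by
      refine Finset.sum_congr rfl fun t htA => ?_
      rw [hsub, hzero t (hAα t htA), sub_zero]
    rw [hAy]
    rcases Finset.eq_empty_or_nonempty A with rfl | hne
    · simpa using by linarith
    · obtain ⟨m, hmA, hm⟩ := exists_top hA hne
      obtain ⟨s, hsα, hcomp⟩ := hmax m
      have hsA : s ∉ A := fun h => hAα s h hsα
      have hins : IsFinChain (insert s A) := finchain_insert hA hm hcomp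
      have hcs := chainSum_le_norm e coord hnorm hdense hcoord hins y
      rw [Finset.sum_insert hsA] at hcs
      have h1 : (1:ℝ) - |coord s y| ≤ |coord s y - coord s x| := by
        have := abs_sub_abs_le_abs_sub (coord s x) (coord s y)
        rw [hone s hsα, abs_sub_comm] at this
        linarith
      have h2 := hterm s hsα
      linarith

include hnorm hdense hcoord in
lemma coord_le_one {y : X} (hy : ‖y‖ ≤ 1) (s : TreeNode) : |coord s y| ≤ 1 := by
  have := chainSum_le_norm e coord hnorm hdense hcoord (finchain_singleton s) y
  simp only [Finset.sum_singleton] at this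
  linarith

include hnorm hdense hcoord in
lemma suff_SE {x : X} (hx : ‖x‖ = 1) {α : Finset TreeNode}
    (hanti : IsTreeAntichain (↑α : Set TreeNode))
    (hmax : ∀ t : TreeNode, ∃ s ∈ α, s <+: t ∨ t <+: s)
    (hone : ∀ s ∈ α, |coord s x| = 1) :
    StronglyExposedPoint (closedBall (0 : X) 1) x := by
  classical
  have hxball : x ∈ closedBall (0 : X) 1 := by
    rw [mem_closedBall_zero_iff, hx]
  refine ⟨hxball, ∑ s ∈ α, (coord s x) • coord s, ?_, ?_⟩ <;>
    [skip; skip] 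
  all_goals
    have happ : ∀ y : X, (∑ s ∈ α, (coord s x) • coord s) y
        = ∑ s ∈ α, coord s x * coord s y := by
      intro y
      simp [ContinuousLinearMap.sum_apply, ContinuousLinearMap.smul_apply, smul_eq_mul]
  all_goals
    have hfx : (∑ s ∈ α, (coord s x) • coord s) x = (α.card : ℝ) := by
      rw [happ]
      have hsq : ∀ s ∈ α, coord s x * coord s x = (1:ℝ) := fun s hs => by
        rw [← sq, ← sq_abs, hone s hs, one_pow]
      rw [Finset.sum_congr rfl hsq]
      simp
  all_goals
    have hkey : ∀ y : X, ‖y‖ ≤ 1 →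
        ∑ s ∈ α, |coord s y - coord s x| =
          (α.card : ℝ) - (∑ s ∈ α, (coord s x) • coord s) y := by
      intro y hy
      rw [happ]
      have hcard : ((α.card : ℝ)) = ∑ _s ∈ α, (1:ℝ) := by simp
      rw [hcard, ← Finset.sum_sub_distrib]
      refine Finset.sum_congr rfl fun s hs => ?_
      have h1 : |coord s x| = 1 := hone s hs
      have h2 : |coord s y| ≤ 1 := coord_le_one e coord hnorm hdense hcoord hy s
      have h3 : coord s x * coord s y ≤ 1 := by
        calc coord s x * coord s y ≤ |coord s x * coord s y| := le_abs_self _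
          _ = |coord s y| := by rw [abs_mul, h1, one_mul]
          _ ≤ 1 := h2
      have h4 : coord s x * coord s x = 1 := by rw [← sq, ← sq_abs, h1, one_pow]
      calc |coord s y - coord s x| = |coord s x * (coord s y - coord s x)| := by
            rw [abs_mul, h1, one_mul]
        _ = |coord s x * coord s y - 1| := by rw [mul_sub, h4]
        _ = 1 - coord s x * coord s y := by rw [abs_sub_comm, abs_of_nonneg (by linarith)]
  · -- maximality of f at x
    intro y hy
    rw [happ, hfx]
    have hy1 : ‖y‖ ≤ 1 := by rwa [mem_closedBall_zero_iff] at hy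
    calc ∑ s ∈ α, coord s x * coord s y ≤ ∑ s ∈ α, (1:ℝ) := by
          refine Finset.sum_le_sum fun s hs => ?_
          calc coord s x * coord s y ≤ |coord s x * coord s y| := le_abs_self _
            _ = |coord s y| := by rw [abs_mul, hone s hs, one_mul]
            _ ≤ 1 := coord_le_one e coord hnorm hdense hcoord hy1 s
      _ = (α.card : ℝ) := by simp
  · -- strong exposure
    intro xn hmem htend
    rw [tendsto_iff_dist_tendsto_zero]
    have hbound : ∀ n, dist (xn n) x ≤
        2 * ((α.card : ℝ) - (∑ s ∈ α, (coord s x) • coord s) (xn n)) := by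
      intro n
      have hyn : ‖xn n‖ ≤ 1 := by
        have := hmem n; rwa [mem_closedBall_zero_iff] at this
      rw [dist_eq_norm]
      calc ‖xn n - x‖ ≤ 2 * ∑ s ∈ α, |coord s (xn n) - coord s x| :=
            est e coord hnorm hdense hcoord hx hanti hmax hone hyn
        _ = 2 * ((α.card : ℝ) - (∑ s ∈ α, (coord s x) • coord s) (xn n)) := by
            rw [hkey (xn n) hyn]
    have hg : Tendsto (fun n => 2 * ((α.card : ℝ) -
        (∑ s ∈ α, (coord s x) • coord s) (xn n))) atTop (𝓝 0) := by
      rw [hfx] at htend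
      have := (tendsto_const_nhds (x := (α.card : ℝ)) (f := atTop)).sub htend
      simp only [sub_self] at this
      simpa using this.const_mul 2
    exact squeeze_zero (fun n => dist_nonneg) hbound hg

include hnorm hdense hcoord in
lemma caseI {x : X} (hx : ‖x‖ = 1) {t : TreeNode} {δ : ℝ} (hδ : 0 < δ)
    (hR : ∀ A : Finset TreeNode, IsFinChain A → t ∈ A → ∑ u ∈ A, |coord u x| ≤ 1 - δ) :
    ∃ v : X, v ≠ 0 ∧ x + v ∈ closedBall (0:X) 1 ∧ x - v ∈ closedBall (0:X) 1 := by
  classical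
  have key : ∀ θ : ℝ, |θ| ≤ δ → ‖x + θ • e t‖ ≤ 1 := by
    intro θ hθ
    refine norm_le_of_chains e coord hnorm hdense hcoord _ _ fun A hA => ?_
    have hterm : ∀ u, coord u (x + θ • e t) = coord u x + θ * (if u = t then 1 else 0) := by
      intro u
      rw [map_add, map_smul, hcoord, smul_eq_mul]
    by_cases htA : t ∈ A
    · rw [← Finset.add_sum_erase A _ htA]
      have h1 : |coord t (x + θ • e t)| ≤ |coord t x| + δ := by
        rw [hterm t, if_pos rfl, mul_one]
        calc |coord t x + θ| ≤ |coord t x| + |θ| := abs_add_le _ _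
          _ ≤ |coord t x| + δ := by linarith
      have h2 : ∑ u ∈ A.erase t, |coord u (x + θ • e t)| = ∑ u ∈ A.erase t, |coord u x| := by
        refine Finset.sum_congr rfl fun u hu => ?_
        rw [hterm u, if_neg (Finset.ne_of_mem_erase hu), mul_zero, add_zero]
      have h3 := hR A hA htA
      rw [← Finset.add_sum_erase A _ htA] at h3
      rw [h2]
      linarith
    · have h2 : ∑ u ∈ A, |coord u (x + θ • e t)| = ∑ u ∈ A, |coord u x| := by
        refine Finset.sum_congr rfl fun u hu => ?_
        rw [hterm u, if_neg (fun h => htA (by rw [← h]; exact hu)), mul_zero, add_zero]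
      rw [h2]
      have := chainSum_le_norm e coord hnorm hdense hcoord hA x
      rw [hx] at this
      exact this
  refine ⟨δ • e t, ?_, ?_, ?_⟩
  · intro h0
    have : ‖δ • e t‖ = δ := by
      rw [norm_smul, Real.norm_eq_abs, abs_of_pos hδ, norm_e e hnorm, mul_one]
    rw [h0, norm_zero] at this
    linarith
  · rw [mem_closedBall_zero_iff]
    exact key δ (by rw [abs_of_pos hδ])
  · rw [mem_closedBall_zero_iff, sub_eq_add_neg, ← neg_smul]
    exact key (-δ) (by rw [abs_neg, abs_of_pos hδ])

lemma branch_len (g : ℕ → TreeNode) (hg0 : g 0 = [])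
    (hgs : ∀ n, ∃ b : Bool, g (n + 1) = g n ++ [b]) : ∀ n, (g n).length = n := by
  intro n
  induction n with
  | zero => simp [hg0]
  | succ n ih =>
    obtain ⟨b, hb⟩ := hgs n
    simp [hb, ih]

lemma branch_prefix_eq (g : ℕ → TreeNode) (hg0 : g 0 = [])
    (hgs : ∀ n, ∃ b : Bool, g (n + 1) = g n ++ [b]) :
    ∀ n t, t <+: g n → t = g t.length := by
  intro n
  induction n with
  | zero =>
    intro t ht
    rw [hg0] at ht
    have : t = [] := List.prefix_nil.mp ht
    subst this
    simp [hg0]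
  | succ n ih =>
    intro t ht
    obtain ⟨b, hb⟩ := hgs n
    by_cases hlen : t.length ≤ n
    · refine ih t (List.prefix_of_prefix_length_le ht ?_ ?_)
      · rw [hb]; exact ⟨[b], rfl⟩
      · rw [branch_len g hg0 hgs n]; exact hlen
    · have h1 := ht.length_le
      rw [branch_len g hg0 hgs (n+1)] at h1
      have h2 : t.length = n + 1 := by omega
      have h3 := ht.eq_of_length (by rw [branch_len g hg0 hgs (n+1)]; exact h2)
      rw [h3, branch_len g hg0 hgs (n+1)]

include hnorm hdense hcoord in
lemma branch_mass (x : X) (g : ℕ → TreeNode) (hg0 : g 0 = [])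
    (hgs : ∀ n, ∃ b : Bool, g (n + 1) = g n ++ [b])
    (hR : ∀ n : ℕ, ∀ δ : ℝ, 0 < δ → ∃ A : Finset TreeNode, IsFinChain A ∧ g n ∈ A ∧
      1 - δ < ∑ u ∈ A, |coord u x|)
    {ε : ℝ} (hε : 0 < ε) :
    ∃ N : ℕ, 1 - ε < ∑ k ∈ Finset.range N, |coord (g k) x| := by
  classical
  obtain ⟨c, hc⟩ := hdense.exists_dist_lt x (by positivity : (0:ℝ) < ε / 3)
  rw [dist_comm, dist_eq_norm] at hc
  set D := c.support.sup List.length with hD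
  obtain ⟨A, hA, hgA, hAsum⟩ := hR (D + 1) (ε / 3) (by positivity)
  set A1 := A.filter (fun u => u.length ≤ D) with hA1
  set A2 := A.filter (fun u => ¬ u.length ≤ D) with hA2
  have hsplit : ∑ u ∈ A, |coord u x| = ∑ u ∈ A1, |coord u x| + ∑ u ∈ A2, |coord u x| :=
    (Finset.sum_filter_add_sum_filter_not A _ _).symm
  have hA2small : ∑ u ∈ A2, |coord u x| ≤ ε / 3 := by
    have heq : ∑ u ∈ A2, |coord u x| = ∑ u ∈ A2, |coord u (x - Phi e c)| := by
      refine Finset.sum_congr rfl fun u hu => ?_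
      have hu2 : ¬ u.length ≤ D := (Finset.mem_filter.mp hu).2
      have hcu : c u = 0 := by
        by_contra h0
        exact hu2 (Finset.le_sup (Finsupp.mem_support_iff.mpr h0))
      have : coord u (x - Phi e c) = coord u x - c u := by
        rw [map_sub, coordPhi e coord hcoord]
      rw [this, hcu, sub_zero]
    rw [heq]
    calc ∑ u ∈ A2, |coord u (x - Phi e c)| ≤ ‖x - Phi e c‖ :=
          chainSum_le_norm e coord hnorm hdense hcoord
            (finchain_subset hA (Finset.filter_subset _ _)) _
      _ ≤ ε / 3 := by rw [norm_sub_rev]; linarith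
  have hA1big : 1 - ε < ∑ u ∈ A1, |coord u x| := by linarith
  refine ⟨D + 2, lt_of_lt_of_le hA1big ?_⟩
  have himg : A1 ⊆ (Finset.range (D + 2)).image g := by
    intro u hu
    have huA : u ∈ A := (Finset.mem_filter.mp hu).1
    have hulen : u.length ≤ D := (Finset.mem_filter.mp hu).2
    have hcomp := hA u huA (g (D + 1)) hgA
    have hpre : u <+: g (D + 1) := by
      rcases hcomp with h | h
      · exact h
      · exfalso
        have := h.length_le
        rw [branch_len g hg0 hgs (D+1)] at this
        omega
    have := branch_prefix_eq g hg0 hgs (D + 1) u hpre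
    rw [Finset.mem_image]
    exact ⟨u.length, Finset.mem_range.mpr (by omega), this.symm⟩
  calc ∑ u ∈ A1, |coord u x| ≤ ∑ u ∈ (Finset.range (D + 2)).image g, |coord u x| :=
        Finset.sum_le_sum_of_subset_of_nonneg himg (fun _ _ _ => abs_nonneg _)
    _ = ∑ k ∈ Finset.range (D + 2), |coord (g k) x| := by
        refine Finset.sum_image fun a ha b hb hab => ?_
        have := congrArg List.length hab
        rwa [branch_len g hg0 hgs a, branch_len g hg0 hgs b] at this

lemma abs_sg_add (r lam θ : ℝ) (hθ : θ = 1 ∨ θ = -1) (h1 : 0 ≤ lam) (h2 : lam ≤ |r|) :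
    |r + θ * (lam * sg r)| = |r| + θ * lam := by
  rcases hθ with rfl | rfl <;> rw [sg] <;> split_ifs with h
  · rw [abs_of_neg h] at h2 ⊢
    have e1 : r + 1 * (lam * (-1)) = r - lam := by ring
    rw [e1, abs_of_nonpos (by linarith)]
    ring
  · rw [abs_of_nonneg (not_lt.mp h)] at h2 ⊢
    have e1 : r + 1 * (lam * 1) = r + lam := by ring
    rw [e1, abs_of_nonneg (by linarith)]
    ring
  · rw [abs_of_neg h] at h2 ⊢
    have e1 : r + -1 * (lam * (-1)) = r + lam := by ring
    rw [e1, abs_of_nonpos (by linarith)]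
    ring
  · rw [abs_of_nonneg (not_lt.mp h)] at h2 ⊢
    have e1 : r + -1 * (lam * 1) = r - lam := by ring
    rw [e1, abs_of_nonneg (by linarith)]
    ring

include hnorm hdense hcoord in
lemma caseII {x : X} (hx : ‖x‖ = 1) {a : TreeNode} (ha : coord a x ≠ 0)
    {β : Finset TreeNode}
    (hβ : ∀ c ∈ β, a <+: c ∧ c ≠ a ∧ coord c x ≠ 0)
    (hanti : IsTreeAntichain (↑β : Set TreeNode))
    (hcover : ∀ t : TreeNode, a <+: t → t ≠ a → ∃ c ∈ β, c <+: t ∨ t <+: c) :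
    ∃ v : X, v ≠ 0 ∧ x + v ∈ closedBall (0:X) 1 ∧ x - v ∈ closedBall (0:X) 1 := by
  classical
  have hβne : β.Nonempty := by
    obtain ⟨c, hc, _⟩ := hcover (a ++ [true]) ⟨[true], rfl⟩ (by simp)
    exact ⟨c, hc⟩
  set lam : ℝ := min (|coord a x|) (β.inf' hβne fun c => |coord c x|) with hlamdef
  have hlam_pos : 0 < lam := by
    rw [hlamdef, lt_min_iff]
    refine ⟨abs_pos.mpr ha, ?_⟩
    rw [Finset.lt_inf'_iff]
    exact fun c hc => abs_pos.mpr (hβ c hc).2.2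
  have hlam_a : lam ≤ |coord a x| := min_le_left _ _
  have hlam_c : ∀ c ∈ β, lam ≤ |coord c x| := fun c hc =>
    le_trans (min_le_right _ _) (Finset.inf'_le _ hc)
  set v : X := lam • (sg (coord a x) • e a - ∑ c ∈ β, sg (coord c x) • e c) with hv
  have haβ : a ∉ β := fun h => (hβ a h).2.1 rfl
  have hcoordv : ∀ u, coord u v =
      if u = a then lam * sg (coord a x)
      else if u ∈ β then -(lam * sg (coord u x)) else 0 := by
    intro u
    rw [hv, map_smul, map_sub, map_smul, map_sum, smul_eq_mul, hcoord]
    have hsum : ∑ c ∈ β, coord u (sg (coord c x) • e c)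
        = if u ∈ β then sg (coord u x) else 0 := by
      rw [Finset.sum_congr rfl (fun c _ => by
        rw [map_smul, hcoord, smul_eq_mul, mul_ite, mul_one, mul_zero])]
      exact Finset.sum_ite_eq β u (fun c => sg (coord c x))
    rw [hsum, smul_eq_mul]
    split_ifs with h1 h2
    · exact absurd (h1 ▸ h2) haβ
    · ring
    · ring
    · ring
  have key : ∀ θ : ℝ, θ = 1 ∨ θ = -1 → ‖x + θ • v‖ ≤ 1 := by
    intro θ hθ
    have hθle : θ * lam ≤ lam ∧ -lam ≤ θ * lam := by
      rcases hθ with rfl | rfl <;> constructor <;> linarith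
    refine norm_le_of_chains e coord hnorm hdense hcoord _ _ fun A hA => ?_
    have hterm : ∀ u, coord u (x + θ • v) = coord u x + θ * coord u v := by
      intro u; rw [map_add, map_smul, smul_eq_mul]
    have hterm_a : a ∈ A → |coord a (x + θ • v)| = |coord a x| + θ * lam := by
      intro _
      rw [hterm, hcoordv, if_pos rfl]
      exact abs_sg_add _ _ _ hθ hlam_pos.le hlam_a
    have hterm_c : ∀ c ∈ β, |coord c (x + θ • v)| = |coord c x| - θ * lam := by
      intro c hc
      rw [hterm, hcoordv, if_neg (fun h => haβ (by rw [← h]; exact hc)), if_pos hc]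
      have e1 : coord c x + θ * -(lam * sg (coord c x))
          = coord c x + (-θ) * (lam * sg (coord c x)) := by ring
      have hθ' : -θ = 1 ∨ -θ = -1 := by
        rcases hθ with rfl | rfl
        · right; norm_num
        · left; norm_num
      rw [e1, abs_sg_add _ _ _ hθ' hlam_pos.le (hlam_c c hc)]
      ring
    have hterm_o : ∀ u, u ≠ a → u ∉ β → |coord u (x + θ • v)| = |coord u x| := by
      intro u h1 h2
      rw [hterm, hcoordv, if_neg h1, if_neg h2, mul_zero, add_zero]
    have hxsum := chainSum_le_norm e coord hnorm hdense hcoord hA x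
    rw [hx] at hxsum
    by_cases haA : a ∈ A <;> by_cases hβA : ∃ c ∈ A, c ∈ β
    · -- both: exact cancellation
      obtain ⟨c, hcA, hcβ⟩ := hβA
      have hca : c ≠ a := (hβ c hcβ).2.1
      have huniq : ∀ u ∈ A, u ≠ c → u ∉ β := by
        intro u huA hne huβ
        rcases hA u huA c hcA with hcmp | hcmp
        · exact (hanti u huβ c hcβ hne).1 hcmp
        · exact (hanti u huβ c hcβ hne).2 hcmp
      have hcA' : c ∈ A.erase a := Finset.mem_erase.mpr ⟨hca, hcA⟩
      rw [← Finset.add_sum_erase A _ haA, ← Finset.add_sum_erase _ _ hcA']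
      have hrest : ∑ u ∈ (A.erase a).erase c, |coord u (x + θ • v)|
          = ∑ u ∈ (A.erase a).erase c, |coord u x| := by
        refine Finset.sum_congr rfl fun u hu => ?_
        have hu1 : u ≠ c := Finset.ne_of_mem_erase hu
        have hu2 : u ≠ a := Finset.ne_of_mem_erase (Finset.mem_of_mem_erase hu)
        exact hterm_o u hu2 (huniq u
          (Finset.mem_of_mem_erase (Finset.mem_of_mem_erase hu)) hu1)
      rw [hrest, hterm_a haA, hterm_c c hcβ]
      have hdecomp : ∑ u ∈ A, |coord u x| = |coord a x| + (|coord c x|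
          + ∑ u ∈ (A.erase a).erase c, |coord u x|) := by
        rw [← Finset.add_sum_erase A _ haA, ← Finset.add_sum_erase _ _ hcA']
      linarith
    · -- a only
      push_neg at hβA
      obtain ⟨m, hmA, hm⟩ := exists_top hA ⟨a, haA⟩
      have hexc : ∃ c ∈ β, c <+: m ∨ m <+: c := by
        by_cases hma : m = a
        · obtain ⟨c₀, hc₀⟩ := hβne
          exact ⟨c₀, hc₀, Or.inr (hma ▸ (hβ c₀ hc₀).1)⟩
        · exact hcover m (hm a haA) hma
      obtain ⟨c₀, hc₀β, hc₀cmp⟩ := hexc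
      have hc₀A : c₀ ∉ A := fun h => hβA c₀ h hc₀β
      have hins : IsFinChain (insert c₀ A) := finchain_insert hA hm (hc₀cmp.symm.symm)
      have hsum := chainSum_le_norm e coord hnorm hdense hcoord hins x
      rw [Finset.sum_insert hc₀A, hx] at hsum
      rw [← Finset.add_sum_erase A _ haA]
      have hrest : ∑ u ∈ A.erase a, |coord u (x + θ • v)|
          = ∑ u ∈ A.erase a, |coord u x| := by
        refine Finset.sum_congr rfl fun u hu => ?_
        exact hterm_o u (Finset.ne_of_mem_erase hu) (fun h2 =>
          hβA u (Finset.mem_of_mem_erase hu) h2)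
      rw [hrest, hterm_a haA]
      have hdecomp : ∑ u ∈ A, |coord u x| = |coord a x| + ∑ u ∈ A.erase a, |coord u x| :=
        (Finset.add_sum_erase A _ haA).symm
      have hc₀lam := hlam_c c₀ hc₀β
      linarith [hθle.1]
    · -- c only
      obtain ⟨c, hcA, hcβ⟩ := hβA
      have huniq : ∀ u ∈ A, u ≠ c → u ∉ β := by
        intro u huA hne huβ
        rcases hA u huA c hcA with hcmp | hcmp
        · exact (hanti u huβ c hcβ hne).1 hcmp
        · exact (hanti u huβ c hcβ hne).2 hcmp
      obtain ⟨m, hmA, hm⟩ := exists_top hA ⟨c, hcA⟩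
      have hins : IsFinChain (insert a A) :=
        finchain_insert hA hm (Or.inl ((hβ c hcβ).1.trans (hm c hcA)))
      have hsum := chainSum_le_norm e coord hnorm hdense hcoord hins x
      rw [Finset.sum_insert haA, hx] at hsum
      rw [← Finset.add_sum_erase A _ hcA]
      have hrest : ∑ u ∈ A.erase c, |coord u (x + θ • v)|
          = ∑ u ∈ A.erase c, |coord u x| := by
        refine Finset.sum_congr rfl fun u hu => ?_
        exact hterm_o u (fun h1 => haA (h1 ▸ Finset.mem_of_mem_erase hu))
          (huniq u (Finset.mem_of_mem_erase hu) (Finset.ne_of_mem_erase hu))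
      rw [hrest, hterm_c c hcβ]
      have hdecomp : ∑ u ∈ A, |coord u x| = |coord c x| + ∑ u ∈ A.erase c, |coord u x| :=
        (Finset.add_sum_erase A _ hcA).symm
      linarith [hθle.2, hlam_a]
    · -- neither
      push_neg at hβA
      have hall : ∑ u ∈ A, |coord u (x + θ • v)| = ∑ u ∈ A, |coord u x| := by
        refine Finset.sum_congr rfl fun u hu => ?_
        exact hterm_o u (fun h1 => haA (h1 ▸ hu)) (fun h2 => hβA u hu h2)
      rw [hall]
      exact hxsum
  refine ⟨v, ?_, ?_, ?_⟩
  · intro h0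
    have h1 : coord a v = lam * sg (coord a x) := by rw [hcoordv, if_pos rfl]
    rw [h0, map_zero] at h1
    have h2 := abs_sg (coord a x)
    have : |lam * sg (coord a x)| = lam := by
      rw [abs_mul, h2, mul_one, abs_of_pos hlam_pos]
    rw [← h1] at this
    simp at this
    linarith
  · rw [mem_closedBall_zero_iff]
    have := key 1 (Or.inl rfl)
    rwa [one_smul] at this
  · rw [mem_closedBall_zero_iff, sub_eq_add_neg, ← neg_one_smul ℝ v]
    exact key (-1) (Or.inr rfl)

include hnorm hdense hcoord in
lemma exists_perturb {x : X} (hx : ‖x‖ = 1)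
    (hno : ¬ ∃ α : Finset TreeNode, IsTreeAntichain (↑α : Set TreeNode) ∧
      (∀ t : TreeNode, ∃ s ∈ α, s <+: t ∨ t <+: s) ∧ ∀ s ∈ α, |coord s x| = 1) :
    ∃ v : X, v ≠ 0 ∧ x + v ∈ closedBall (0:X) 1 ∧ x - v ∈ closedBall (0:X) 1 := by
  classical
  by_cases hI : ∃ t : TreeNode, ∃ δ : ℝ, 0 < δ ∧
      ∀ A : Finset TreeNode, IsFinChain A → t ∈ A → ∑ u ∈ A, |coord u x| ≤ 1 - δ
  · obtain ⟨t, δ, hδ, hR⟩ := hI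
    exact caseI e coord hnorm hdense hcoord hx hδ hR
  · push_neg at hI
    have hroot : |coord ([] : TreeNode) x| ≠ 1 := by
      intro h
      refine hno ⟨{[]}, ?_, ?_, ?_⟩
      · intro s hs t ht hne
        simp only [Finset.coe_singleton, Set.mem_singleton_iff] at hs ht
        exact absurd (hs.trans ht.symm) hne
      · exact fun t => ⟨[], Finset.mem_singleton_self _, Or.inl t.nil_prefix⟩
      · intro s hs
        rw [Finset.mem_singleton] at hs
        rw [hs]; exact h
    obtain ⟨g, hg0, hgs, hgS⟩ := konig {s : TreeNode | |coord s x| = 1} [] (by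
      rintro ⟨β, h1, h2, h3⟩
      refine hno ⟨β, h2, ?_, fun s hs => (h1 s hs).2.2⟩
      intro t
      by_cases ht : t = []
      · obtain ⟨s, hs, _⟩ := h3 [true] ([true]).nil_prefix (by simp)
        exact ⟨s, hs, Or.inr (ht ▸ s.nil_prefix)⟩
      · obtain ⟨s, hs, hcmp⟩ := h3 t t.nil_prefix ht
        exact ⟨s, hs, hcmp⟩)
    have hgnotS : ∀ n, |coord (g n) x| ≠ 1 := by
      intro n
      cases n with
      | zero => rw [hg0]; exact hroot
      | succ n => exact hgS n
    have hmass : ∀ ε : ℝ, 0 < ε → ∃ N, 1 - ε < ∑ k ∈ Finset.range N, |coord (g k) x| :=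
      fun ε hε => branch_mass e coord hnorm hdense hcoord x g hg0 hgs
        (fun n δ hδ => hI (g n) δ hδ) hε
    have hex : ∃ j, coord (g j) x ≠ 0 := by
      by_contra hzero
      push_neg at hzero
      obtain ⟨N, hN⟩ := hmass (1/2) (by norm_num)
      rw [Finset.sum_congr rfl (fun k _ => by rw [hzero k, abs_zero])] at hN
      simp at hN
      linarith
    set j := Nat.find hex with hjdef
    have hj : coord (g j) x ≠ 0 := Nat.find_spec hex
    have hjmin : ∀ k, k < j → coord (g k) x = 0 := fun k hk =>
      not_not.mp (Nat.find_min hex hk)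
    set a := g j with hadef
    by_cases hII : ∃ β : Finset TreeNode,
        (∀ s ∈ β, a <+: s ∧ s ≠ a ∧ s ∈ {u : TreeNode | coord u x ≠ 0}) ∧
        IsTreeAntichain (↑β : Set TreeNode) ∧
        ∀ t : TreeNode, a <+: t → t ≠ a → ∃ s ∈ β, s <+: t ∨ t <+: s
    · obtain ⟨β, h1, h2, h3⟩ := hII
      exact caseII e coord hnorm hdense hcoord hx hj
        (fun c hc => ⟨(h1 c hc).1, (h1 c hc).2.1, (h1 c hc).2.2⟩) h2 h3
    · obtain ⟨g', hg'0, hg's, hg'S⟩ := konig {u : TreeNode | coord u x ≠ 0} a hII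
      set hbr : ℕ → TreeNode := fun k => if k < j then g k else g' (k - j) with hbrdef
      have hbrj : hbr j = a := by
        simp only [hbrdef, lt_self_iff_false, if_false, Nat.sub_self]
        exact hg'0
      have hbr0 : hbr 0 = [] := by
        by_cases h0 : 0 < j
        · simp only [hbrdef, if_pos h0]; exact hg0
        · have hj0 : j = 0 := by omega
          simp only [hbrdef, if_neg (by omega : ¬ (0:ℕ) < j)]
          rw [show 0 - j = 0 from by omega, hg'0, hadef, hj0, hg0]
      have hbrs : ∀ n, ∃ b : Bool, hbr (n + 1) = hbr n ++ [b] := by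
        intro n
        by_cases h1 : n + 1 < j
        · obtain ⟨b, hb⟩ := hgs n
          refine ⟨b, ?_⟩
          simp only [hbrdef, if_pos h1, if_pos (by omega : n < j)]
          exact hb
        · by_cases h2 : n < j
          · have hj1 : j = n + 1 := by omega
            obtain ⟨b, hb⟩ := hgs n
            refine ⟨b, ?_⟩
            simp only [hbrdef, if_neg h1, if_pos h2]
            rw [show n + 1 - j = 0 by omega, hg'0, hadef, hj1]
            exact hb
          · obtain ⟨b, hb⟩ := hg's (n - j)
            refine ⟨b, ?_⟩
            simp only [hbrdef, if_neg h1, if_neg h2]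
            rw [show n + 1 - j = (n - j) + 1 by omega]
            exact hb
      have hbrz : ∀ k, k ≠ j → coord (hbr k) x = 0 := by
        intro k hk
        by_cases h1 : k < j
        · simp only [hbrdef, if_pos h1]
          exact hjmin k h1
        · have h2 : j < k := by omega
          simp only [hbrdef, if_neg h1]
          have h3 : k - j = (k - j - 1) + 1 := by omega
          rw [h3]
          exact not_not.mp (hg'S (k - j - 1))
      have ha1 : |coord a x| < 1 := by
        refine lt_of_le_of_ne ?_ (hgnotS j)
        exact coord_le_one e coord hnorm hdense hcoord (le_of_eq hx) a
      obtain ⟨N, hN⟩ := branch_mass e coord hnorm hdense hcoord x hbr hbr0 hbrs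
        (fun n δ hδ => hI (hbr n) δ hδ) (show (0:ℝ) < 1 - |coord a x| by linarith)
      have hNle : ∑ k ∈ Finset.range N, |coord (hbr k) x| ≤ |coord a x| := by
        calc ∑ k ∈ Finset.range N, |coord (hbr k) x|
            ≤ ∑ k ∈ Finset.range N, (if k = j then |coord a x| else 0) := by
              refine Finset.sum_le_sum fun k _ => ?_
              by_cases hk : k = j
              · rw [if_pos hk, hk, hbrj]
              · rw [if_neg hk, hbrz k hk, abs_zero]
          _ ≤ |coord a x| := by
              rw [Finset.sum_ite_eq' (Finset.range N) j (fun _ => |coord a x|)]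
              split_ifs
              · exact le_refl _
              · exact abs_nonneg _
      linarith

lemma strict_conv {p q pa pb z : ℝ} (hp : |p| ≤ 1) (hq : |q| ≤ 1) (ha : 0 < pa)
    (hb : 0 < pb) (hab : pa + pb = 1) (hz : pa * p + pb * q = z) (h1 : |z| = 1) :
    p = z ∧ q = z := by
  have hp' := abs_le.mp hp
  have hq' := abs_le.mp hq
  have e1 : 0 ≤ pa * (1 - p) := mul_nonneg ha.le (by linarith [hp'.2])
  have e2 : 0 ≤ pb * (1 - q) := mul_nonneg hb.le (by linarith [hq'.2])
  have e3 : 0 ≤ pa * (p + 1) := mul_nonneg ha.le (by linarith [hp'.1])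
  have e4 : 0 ≤ pb * (q + 1) := mul_nonneg hb.le (by linarith [hq'.1])
  rcases (abs_eq zero_le_one).mp h1 with hz1 | hz1
  · have hp1 : p = 1 := by nlinarith
    have hq1 : q = 1 := by nlinarith
    exact ⟨hp1.trans hz1.symm, hq1.trans hz1.symm⟩
  · have hp1 : p = -1 := by nlinarith
    have hq1 : q = -1 := by nlinarith
    exact ⟨hp1.trans hz1.symm, hq1.trans hz1.symm⟩

include hnorm hdense hcoord in
/-- a two-sided perturbation inside the ball kills strong exposedness unless trivial -/
lemma SE_no_perturb {x : X} (hSE : StronglyExposedPoint (closedBall (0:X) 1) x)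
    {v : X} (h1 : x + v ∈ closedBall (0:X) 1) (h2 : x - v ∈ closedBall (0:X) 1) : v = 0 := by
  obtain ⟨hxball, f, hmaxf, hseq⟩ := hSE
  have ha := hmaxf _ h1
  have hb := hmaxf _ h2
  rw [map_add] at ha
  rw [map_sub] at hb
  have hfv : f v = 0 := by linarith
  have htd : Tendsto (fun _ : ℕ => f (x + v)) atTop (𝓝 (f x)) := by
    rw [map_add, hfv, add_zero]
    exact tendsto_const_nhds
  have hconv := hseq (fun _ : ℕ => x + v) (fun _ => h1) htd
  have := tendsto_nhds_unique hconv tendsto_const_nhds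
  exact left_eq_add.mp this

include hnorm hdense hcoord in
lemma no_perturb_norm_one {x : X} (hxball : x ∈ closedBall (0:X) 1)
    (hnov : ∀ v : X, x + v ∈ closedBall (0:X) 1 → x - v ∈ closedBall (0:X) 1 → v = 0) :
    ‖x‖ = 1 := by
  rw [mem_closedBall_zero_iff] at hxball
  rcases eq_or_lt_of_le hxball with h | h
  · exact h
  · exfalso
    set v : X := (1 - ‖x‖) • e [] with hv
    have hvnorm : ‖v‖ = 1 - ‖x‖ := by
      rw [hv, norm_smul, Real.norm_eq_abs, abs_of_pos (by linarith), norm_e e hnorm, mul_one]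
    have hmem : ∀ θ : ℝ, |θ| = 1 → x + θ • v ∈ closedBall (0:X) 1 := by
      intro θ hθ
      rw [mem_closedBall_zero_iff]
      calc ‖x + θ • v‖ ≤ ‖x‖ + ‖θ • v‖ := norm_add_le _ _
        _ = ‖x‖ + (1 - ‖x‖) := by
            rw [norm_smul, Real.norm_eq_abs, hθ, one_mul, hvnorm]
        _ = 1 := by ring
    have h1 := hmem 1 (by norm_num)
    have h2 := hmem (-1) (by norm_num)
    rw [one_smul] at h1
    rw [neg_one_smul, ← sub_eq_add_neg] at h2
    have := hnov v h1 h2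
    rw [this, norm_zero] at hvnorm
    linarith

include hnorm hdense hcoord in
lemma est_eq {x : X} (hx : ‖x‖ = 1) {α : Finset TreeNode}
    (hanti : IsTreeAntichain (↑α : Set TreeNode))
    (hmax : ∀ t : TreeNode, ∃ s ∈ α, s <+: t ∨ t <+: s)
    (hone : ∀ s ∈ α, |coord s x| = 1)
    {y : X} (hy : y ∈ closedBall (0:X) 1)
    (heq : ∀ s ∈ α, coord s y = coord s x) : y = x := by
  rw [mem_closedBall_zero_iff] at hy
  have hest := est e coord hnorm hdense hcoord hx hanti hmax hone hy
  rw [Finset.sum_congr rfl (fun s hs => by rw [heq s hs, sub_self, abs_zero])] at hest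
  simp only [Finset.sum_const_zero, mul_zero] at hest
  have : ‖y - x‖ = 0 := le_antisymm hest (norm_nonneg _)
  rwa [norm_sub_eq_zero_iff] at this

end Main
end BTaux

/-- **Strongly exposed points of `B_{X_T}`.** In the binary tree space (a Banach space `X`
with a family `(e_t)` with dense finitely supported span carrying the tree norm, and
biorthogonal coordinate functionals `coord`), a norm-one point `x` is a strongly exposed point
of the closed unit ball if and only if there is a finite maximal antichain `α` of the tree
with `|x(s)| = 1` for all `s ∈ α`; moreover the extreme points of the ball coincide with the
strongly exposed points. -/
theorem binary_tree_strongly_exposed_iff {X : Type*} [NormedAddCommGroup X]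
    [NormedSpace ℝ X] [CompleteSpace X] (e : TreeNode → X) (coord : TreeNode → X →L[ℝ] ℝ)
    (hnorm : ∀ c : TreeNode →₀ ℝ, ‖c.sum fun t a => a • e t‖ = treeNorm c)
    (hdense : DenseRange fun c : TreeNode →₀ ℝ => c.sum fun t a => a • e t)
    (hcoord : ∀ s t, coord s (e t) = if s = t then 1 else 0) :
    (∀ x : X, ‖x‖ = 1 →
      (StronglyExposedPoint (closedBall (0 : X) 1) x ↔
        ∃ α : Finset TreeNode, IsTreeAntichain (↑α : Set TreeNode) ∧
          (∀ t : TreeNode, ∃ s ∈ α, s <+: t ∨ t <+: s) ∧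
          ∀ s ∈ α, |coord s x| = 1)) ∧
    Set.extremePoints ℝ (closedBall (0 : X) 1) =
      {x | StronglyExposedPoint (closedBall (0 : X) 1) x} := by
  classical
  have hnorm' : ∀ c : TreeNode →₀ ℝ, ‖BTaux.Phi e c‖ = treeNorm c := hnorm
  have hdense' : DenseRange (BTaux.Phi e) := hdense
  have main : ∀ x : X, ‖x‖ = 1 →
      (StronglyExposedPoint (closedBall (0 : X) 1) x ↔
        ∃ α : Finset TreeNode, IsTreeAntichain (↑α : Set TreeNode) ∧
          (∀ t : TreeNode, ∃ s ∈ α, s <+: t ∨ t <+: s) ∧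
          ∀ s ∈ α, |coord s x| = 1) := by
    intro x hx
    constructor
    · intro hSE
      by_contra hno
      obtain ⟨v, hv0, hv1, hv2⟩ := BTaux.exists_perturb e coord hnorm' hdense' hcoord hx hno
      exact hv0 (BTaux.SE_no_perturb e coord hnorm' hdense' hcoord hSE hv1 hv2)
    · rintro ⟨α, h1, h2, h3⟩
      exact BTaux.suff_SE e coord hnorm' hdense' hcoord hx h1 h2 h3
  refine ⟨main, ?_⟩
  ext x
  simp only [Set.mem_setOf_eq]
  rw [mem_extremePoints]
  constructor
  · rintro ⟨hxball, hext⟩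
    have hnov : ∀ v : X, x + v ∈ closedBall (0:X) 1 → x - v ∈ closedBall (0:X) 1 → v = 0 := by
      intro v h1 h2
      have hmemseg : x ∈ openSegment ℝ (x - v) (x + v) := by
        refine ⟨1/2, 1/2, by norm_num, by norm_num, by norm_num, ?_⟩
        rw [smul_sub, smul_add]
        rw [show (1/2:ℝ) • x - (1/2:ℝ) • v + ((1/2:ℝ) • x + (1/2:ℝ) • v)
          = ((1/2:ℝ) + (1/2:ℝ)) • x from by rw [add_smul]; abel]
        norm_num
      obtain ⟨he1, he2⟩ := hext (x - v) h2 (x + v) h1 hmemseg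
      exact left_eq_add.mp he2.symm
    have hx1 : ‖x‖ = 1 := BTaux.no_perturb_norm_one e coord hnorm' hdense' hcoord hxball hnov
    have hα : ∃ α : Finset TreeNode, IsTreeAntichain (↑α : Set TreeNode) ∧
        (∀ t : TreeNode, ∃ s ∈ α, s <+: t ∨ t <+: s) ∧ ∀ s ∈ α, |coord s x| = 1 := by
      by_contra hno
      obtain ⟨v, hv0, hv1, hv2⟩ := BTaux.exists_perturb e coord hnorm' hdense' hcoord hx1 hno
      exact hv0 (hnov v hv1 hv2)
    obtain ⟨α, h1, h2, h3⟩ := hα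
    exact BTaux.suff_SE e coord hnorm' hdense' hcoord hx1 h1 h2 h3
  · intro hSE
    have hxball := hSE.1
    have hnov : ∀ v : X, x + v ∈ closedBall (0:X) 1 → x - v ∈ closedBall (0:X) 1 → v = 0 :=
      fun v h1 h2 => BTaux.SE_no_perturb e coord hnorm' hdense' hcoord hSE h1 h2
    have hx1 : ‖x‖ = 1 := BTaux.no_perturb_norm_one e coord hnorm' hdense' hcoord hxball hnov
    obtain ⟨α, h1, h2, h3⟩ := (main x hx1).mp hSE
    refine ⟨hxball, ?_⟩
    rintro x₁ hx₁ x₂ hx₂ ⟨pa, pb, hpa, hpb, hab, hcomb⟩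
    have hcoords : ∀ s ∈ α, coord s x₁ = coord s x ∧ coord s x₂ = coord s x := by
      intro s hs
      have hzc : pa * coord s x₁ + pb * coord s x₂ = coord s x := by
        rw [← hcomb, map_add, map_smul, map_smul, smul_eq_mul, smul_eq_mul]
      exact BTaux.strict_conv
        (BTaux.coord_le_one e coord hnorm' hdense' hcoord (mem_closedBall_zero_iff.mp hx₁) s)
        (BTaux.coord_le_one e coord hnorm' hdense' hcoord (mem_closedBall_zero_iff.mp hx₂) s)
        hpa hpb hab hzc (h3 s hs)
    constructor
    · exact BTaux.est_eq e coord hnorm' hdense' hcoord hx1 h1 h2 h3 hx₁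
        (fun s hs => (hcoords s hs).1)
    · exact BTaux.est_eq e coord hnorm' hdense' hcoord hx1 h1 h2 h3 hx₂
        (fun s hs => (hcoords s hs).2)
end

section
/- Let X_T be the binary tree space. The set of strongly exposed points of the closed unit ball B_{X_T} is generating for B_{X_T}: B_{X_T} equals the closed convex hull of its strongly exposed points. In particular, B_{X_T} is dentable. -/
open Metric Filter Topology

/-- `x` is a denting point of `A`: `x` belongs to slices of `A` of arbitrarily small
diameter. -/
def DentingPoint {X : Type*} [NormedAddCommGroup X] [NormedSpace ℝ X]
    (A : Set X) (x : X) : Prop :=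
  x ∈ A ∧ ∀ ε > (0 : ℝ), ∃ (f : X →L[ℝ] ℝ) (δ : ℝ), 0 < δ ∧
    x ∈ ballSlice A f δ ∧ Metric.diam (ballSlice A f δ) ≤ ε

namespace TreeAux

noncomputable section
open Finset

/-- The set of chain-sums for `c`. -/
def chainSums (c : TreeNode →₀ ℝ) : Set ℝ :=
  {r | ∃ A : Finset TreeNode, IsFinChain A ∧ r = ∑ t ∈ A, |c t|}

lemma treeNorm_def (c : TreeNode →₀ ℝ) : treeNorm c = sSup (chainSums c) := rfl

lemma chainSums_nonempty (c : TreeNode →₀ ℝ) : (chainSums c).Nonempty :=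
  ⟨0, ∅, fun s hs => absurd hs (Finset.notMem_empty s), by simp⟩

lemma chainSums_bdd (c : TreeNode →₀ ℝ) : BddAbove (chainSums c) := by
  refine ⟨∑ t ∈ c.support, |c t|, ?_⟩
  rintro r ⟨A, hA, rfl⟩
  classical
  have h1 : ∑ t ∈ A, |c t| = ∑ t ∈ A.filter (· ∈ c.support), |c t| := by
    refine (Finset.sum_subset (Finset.filter_subset _ _) ?_).symm
    intro x hx hxn
    have : c x = 0 := by
      by_contra h
      exact hxn (Finset.mem_filter.2 ⟨hx, Finsupp.mem_support_iff.2 h⟩)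
    simp [this]
  rw [h1]
  refine Finset.sum_le_sum_of_subset_of_nonneg ?_ (fun _ _ _ => abs_nonneg _)
  intro x hx
  exact (Finset.mem_filter.1 hx).2

lemma chain_sum_le_treeNorm {c : TreeNode →₀ ℝ} {A : Finset TreeNode} (hA : IsFinChain A) :
    ∑ t ∈ A, |c t| ≤ treeNorm c :=
  le_csSup (chainSums_bdd c) ⟨A, hA, rfl⟩

lemma treeNorm_nonneg (c : TreeNode →₀ ℝ) : 0 ≤ treeNorm c := by
  have := chain_sum_le_treeNorm (c := c) (A := ∅)
    (fun s hs => absurd hs (Finset.notMem_empty s))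
  simpa using this

lemma isFinChain_singleton (s : TreeNode) : IsFinChain {s} := by
  intro a ha b hb
  simp only [Finset.mem_singleton] at ha hb
  subst ha; subst hb; exact Or.inl (List.prefix_refl _)

lemma abs_le_treeNorm (c : TreeNode →₀ ℝ) (s : TreeNode) : |c s| ≤ treeNorm c := by
  have := chain_sum_le_treeNorm (c := c) (isFinChain_singleton s)
  simpa using this

lemma treeNorm_le {c : TreeNode →₀ ℝ} {r : ℝ}
    (h : ∀ A : Finset TreeNode, IsFinChain A → ∑ t ∈ A, |c t| ≤ r) : treeNorm c ≤ r := by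
  refine csSup_le (chainSums_nonempty c) ?_
  rintro x ⟨A, hA, rfl⟩
  exact h A hA

lemma treeNorm_smul_le (r : ℝ) (c : TreeNode →₀ ℝ) :
    treeNorm (r • c) ≤ |r| * treeNorm c := by
  refine treeNorm_le fun A hA => ?_
  have : ∑ t ∈ A, |(r • c) t| = |r| * ∑ t ∈ A, |c t| := by
    rw [Finset.mul_sum]
    refine Finset.sum_congr rfl fun t _ => ?_
    simp [Finsupp.smul_apply, abs_mul]
  rw [this]
  exact mul_le_mul_of_nonneg_left (chain_sum_le_treeNorm hA) (abs_nonneg r)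

lemma pair_abs_le_treeNorm {c : TreeNode →₀ ℝ} {s t : TreeNode} (hst : s <+: t) (hne : s ≠ t) :
    |c s| + |c t| ≤ treeNorm c := by
  classical
  have hchain : IsFinChain {s, t} := by
    intro a ha b hb
    simp only [Finset.mem_insert, Finset.mem_singleton] at ha hb
    rcases ha with rfl | rfl <;> rcases hb with rfl | rfl
    · exact Or.inl (List.prefix_refl _)
    · exact Or.inl hst
    · exact Or.inr hst
    · exact Or.inl (List.prefix_refl _)
  have := chain_sum_le_treeNorm (c := c) hchain
  rwa [Finset.sum_pair hne] at this

/-- Sign vectors over (relative) maximal antichains rooted at `t`. -/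
def SignVec (t : TreeNode) (v : TreeNode →₀ ℝ) : Prop :=
  ∃ α : Finset TreeNode,
    (∀ s ∈ α, t <+: s) ∧
    (∀ s ∈ α, ∀ s' ∈ α, s <+: s' → s = s') ∧
    (∀ l : List Bool, ∃ s ∈ α, s <+: t ++ l ∨ t ++ l <+: s) ∧
    (∀ s ∈ α, |v s| = 1) ∧ (∀ s, s ∉ α → v s = 0)

lemma signVec_single (t : TreeNode) {g : ℝ} (hg : |g| = 1) :
    SignVec t (Finsupp.single t g) := by
  classical
  refine ⟨{t}, ?_, ?_, ?_, ?_, ?_⟩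
  · intro s hs; rw [Finset.mem_singleton] at hs; subst hs; exact List.prefix_refl _
  · intro s hs s' hs' _
    rw [Finset.mem_singleton] at hs hs'; rw [hs, hs']
  · intro l; exact ⟨t, Finset.mem_singleton_self t, Or.inl (List.prefix_append t l)⟩
  · intro s hs; rw [Finset.mem_singleton] at hs; subst hs
    simpa using hg
  · intro s hs; rw [Finset.mem_singleton] at hs
    rw [Finsupp.single_apply, if_neg (fun h => hs (by rw [h]))]

lemma signVec_neg {t : TreeNode} {v : TreeNode →₀ ℝ} (h : SignVec t v) : SignVec t (-v) := by
  obtain ⟨α, h1, h2, h3, h4, h5⟩ := h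
  exact ⟨α, h1, h2, h3, fun s hs => by simpa using h4 s hs,
    fun s hs => by simp [h5 s hs]⟩

lemma prefix_bool_eq {t s : TreeNode} {b b' : Bool}
    (h1 : t ++ [b] <+: s) (h2 : t ++ [b'] <+: s) : b = b' := by
  have hcomp := List.prefix_or_prefix_of_prefix h1 h2
  have hlen : (t ++ [b]).length = (t ++ [b']).length := by simp
  have heq : t ++ [b] = t ++ [b'] := by
    rcases hcomp with h | h
    · exact h.eq_of_length hlen
    · exact (h.eq_of_length hlen.symm).symm
  have := List.append_cancel_left heq
  simpa using this

lemma signVec_add {t : TreeNode} {v w : TreeNode →₀ ℝ}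
    (hv : SignVec (t ++ [false]) v) (hw : SignVec (t ++ [true]) w) :
    SignVec t (v + w) := by
  classical
  obtain ⟨αf, hf1, hf2, hf3, hf4, hf5⟩ := hv
  obtain ⟨αt, ht1, ht2, ht3, ht4, ht5⟩ := hw
  have hcross : ∀ s, s ∈ αf → s ∈ αt → False := by
    intro s hsf hst
    have h1 := hf1 s hsf
    have h2 := ht1 s hst
    exact Bool.noConfusion (prefix_bool_eq h1 h2)
  have hcrossp : ∀ s s', s ∈ αf → s' ∈ αt → s <+: s' → False := by
    intro s s' hsf hst hp
    exact Bool.noConfusion (prefix_bool_eq ((hf1 s hsf).trans hp) (ht1 s' hst))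
  have hcrossp' : ∀ s s', s ∈ αt → s' ∈ αf → s <+: s' → False := by
    intro s s' hst hsf hp
    exact Bool.noConfusion (prefix_bool_eq (hf1 s' hsf) ((ht1 s hst).trans hp))
  refine ⟨αf ∪ αt, ?_, ?_, ?_, ?_, ?_⟩
  · intro s hs
    rcases Finset.mem_union.1 hs with h | h
    · exact (List.prefix_append t [false]).trans (hf1 s h)
    · exact (List.prefix_append t [true]).trans (ht1 s h)
  · intro s hs s' hs' hp
    rcases Finset.mem_union.1 hs with h | h <;> rcases Finset.mem_union.1 hs' with h' | h'
    · exact hf2 s h s' h' hp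
    · exact absurd (hcrossp s s' h h' hp) (by simp)
    · exact absurd (hcrossp' s s' h h' hp) (by simp)
    · exact ht2 s h s' h' hp
  · intro l
    match l with
    | [] =>
      obtain ⟨s, hs, _⟩ := hf3 []
      refine ⟨s, Finset.mem_union_left _ hs, Or.inr ?_⟩
      have : t <+: s := (List.prefix_append t [false]).trans (hf1 s hs)
      simpa using this
    | false :: l' =>
      obtain ⟨s, hs, h⟩ := hf3 l'
      refine ⟨s, Finset.mem_union_left _ hs, ?_⟩
      have heq : (t ++ [false]) ++ l' = t ++ (false :: l') := by simp
      rwa [heq] at h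
    | true :: l' =>
      obtain ⟨s, hs, h⟩ := ht3 l'
      refine ⟨s, Finset.mem_union_right _ hs, ?_⟩
      have heq : (t ++ [true]) ++ l' = t ++ (true :: l') := by simp
      rwa [heq] at h
  · intro s hs
    rcases Finset.mem_union.1 hs with h | h
    · have : w s = 0 := ht5 s (fun h' => hcross s h h')
      simp only [Finsupp.add_apply, this, add_zero]
      exact hf4 s h
    · have : v s = 0 := hf5 s (fun h' => hcross s h' h)
      simp only [Finsupp.add_apply, this, zero_add]
      exact ht4 s h
  · intro s hs
    rw [Finset.mem_union] at hs
    push_neg at hs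
    simp [Finsupp.add_apply, hf5 s hs.1, ht5 s hs.2]

end
end TreeAux

namespace TreeAux
noncomputable section
open Finset Pointwise

lemma zero_mem_hull (t : TreeNode) : (0 : TreeNode →₀ ℝ) ∈ convexHull ℝ {v | SignVec t v} := by
  have hw : SignVec t (Finsupp.single t 1) := signVec_single t (by norm_num)
  have hw' : SignVec t (-(Finsupp.single t 1)) := signVec_neg hw
  have h1 : (Finsupp.single t 1 : TreeNode →₀ ℝ) ∈ convexHull ℝ {v | SignVec t v} :=
    subset_convexHull ℝ _ hw
  have h2 : (-(Finsupp.single t 1) : TreeNode →₀ ℝ) ∈ convexHull ℝ {v | SignVec t v} :=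
    subset_convexHull ℝ _ hw'
  have := (convex_convexHull ℝ {v | SignVec t v}) h1 h2
    (by norm_num : (0:ℝ) ≤ 1/2) (by norm_num : (0:ℝ) ≤ 1/2) (by norm_num)
  simpa [smul_neg] using this

lemma mem_hull_of_treeNorm_le (h : ℕ) : ∀ (t : TreeNode) (c : TreeNode →₀ ℝ),
    (∀ s ∈ c.support, t <+: s ∧ s.length < t.length + h) → treeNorm c ≤ 1 →
    c ∈ convexHull ℝ {v | SignVec t v} := by
  classical
  induction h with
  | zero =>
    intro t c hsupp hle
    have hc : c = 0 := by
      ext s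
      by_contra hs
      have hmem : s ∈ c.support := Finsupp.mem_support_iff.2 (by simpa using hs)
      obtain ⟨hpre, hlen⟩ := hsupp s hmem
      have := hpre.length_le
      omega
    rw [hc]
    exact zero_mem_hull t
  | succ h IH =>
    intro t c hsupp hle
    set a := c t with ha
    have habs : |a| ≤ 1 := le_trans (abs_le_treeNorm c t) hle
    by_cases hm : 1 - |a| = 0
    · -- c is supported only at t and |a| = 1
      have hzero : ∀ s, s ≠ t → c s = 0 := by
        intro s hs
        by_contra hcs
        have hmem : s ∈ c.support := Finsupp.mem_support_iff.2 hcs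
        have hpre := (hsupp s hmem).1
        have := pair_abs_le_treeNorm (c := c) hpre (Ne.symm hs)
        have h1 : |a| = 1 := by linarith [abs_nonneg (c s)]
        have h2 : |c s| > 0 := abs_pos.2 hcs
        linarith
      have hc : SignVec t c := by
        refine ⟨{t}, ?_, ?_, ?_, ?_, ?_⟩
        · intro s hs; rw [Finset.mem_singleton] at hs; subst hs; exact List.prefix_refl _
        · intro s hs s' hs' _; rw [Finset.mem_singleton] at hs hs'; rw [hs, hs']
        · intro l; exact ⟨t, Finset.mem_singleton_self t, Or.inl (List.prefix_append t l)⟩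
        · intro s hs; rw [Finset.mem_singleton] at hs; subst hs; linarith
        · intro s hs; rw [Finset.mem_singleton] at hs; exact hzero s hs
      exact subset_convexHull ℝ _ hc
    · have hmpos : 0 < 1 - |a| := lt_of_le_of_ne (by linarith) (Ne.symm hm)
      set m := 1 - |a| with hmdef
      -- the two filtered pieces
      set cf := Finsupp.filter (fun s => (t ++ [false]) <+: s) c with hcf
      set ct := Finsupp.filter (fun s => (t ++ [true]) <+: s) c with hct
      -- decomposition
      have hdec : c = Finsupp.single t a + cf + ct := by
        ext s
        simp only [Finsupp.add_apply, Finsupp.single_apply, hcf, hct, Finsupp.filter_apply]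
        by_cases hst : s = t
        · subst hst
          have hnf : ¬ (s ++ [false] <+: s) := by
            intro h; have := h.length_le; simp at this
          have hnt : ¬ (s ++ [true] <+: s) := by
            intro h; have := h.length_le; simp at this
          simp [hnf, hnt]
          exact ha.symm
        · rw [if_neg (fun h => hst (h.symm))]
          by_cases hcs : c s = 0
          · rw [hcs]; simp
          · have hmem : s ∈ c.support := Finsupp.mem_support_iff.2 hcs
            obtain ⟨l, rfl⟩ := (hsupp s hmem).1
            match l with
            | [] => exact absurd (List.append_nil t) hst
            | b :: l' =>
              have hpb : t ++ [b] <+: t ++ b :: l' := by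
                refine ⟨l', by simp⟩
              have hnb : ¬ (t ++ [!b] <+: t ++ b :: l') := by
                intro h
                have := prefix_bool_eq h hpb
                simp at this
              cases b
              · have hnb' : ¬ (t ++ [true] <+: t ++ false :: l') := by simpa using hnb
                simp [hpb, hnb']
              · have hnb' : ¬ (t ++ [false] <+: t ++ true :: l') := by simpa using hnb
                simp [hpb, hnb']
      -- norm bounds for pieces
      have hpiece : ∀ (b : Bool), treeNorm (Finsupp.filter (fun s => (t ++ [b]) <+: s) c) ≤ m := by
        intro b
        refine treeNorm_le fun A hA => ?_
        set cb := Finsupp.filter (fun s => (t ++ [b]) <+: s) c with hcb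
        set A' := A.filter (fun s => (t ++ [b]) <+: s) with hA'
        have h1 : ∑ u ∈ A, |cb u| = ∑ u ∈ A', |c u| := by
          have e1 : ∑ u ∈ A', |cb u| = ∑ u ∈ A, |cb u| := by
            refine Finset.sum_subset (Finset.filter_subset _ _) ?_
            intro u hu hun
            have : ¬ (t ++ [b]) <+: u := fun h => hun (Finset.mem_filter.2 ⟨hu, h⟩)
            rw [hcb, Finsupp.filter_apply, if_neg this, abs_zero]
          have e2 : ∑ u ∈ A', |cb u| = ∑ u ∈ A', |c u| :=
            Finset.sum_congr rfl (fun u hu => by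
              rw [hcb, Finsupp.filter_apply, if_pos (Finset.mem_filter.1 hu).2])
          rw [← e1, e2]
        have htA' : t ∉ A' := by
          intro h
          have := (Finset.mem_filter.1 h).2.length_le
          simp at this
        have hchain : IsFinChain (insert t A') := by
          intro x hx y hy
          rcases Finset.mem_insert.1 hx with rfl | hx' <;>
            rcases Finset.mem_insert.1 hy with rfl | hy'
          · exact Or.inl (List.prefix_refl _)
          · exact Or.inl ((List.prefix_append x [b]).trans (Finset.mem_filter.1 hy').2)
          · exact Or.inr ((List.prefix_append y [b]).trans (Finset.mem_filter.1 hx').2)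
          · exact hA x (Finset.filter_subset _ _ hx') y (Finset.filter_subset _ _ hy')
        have hsum := chain_sum_le_treeNorm (c := c) hchain
        rw [Finset.sum_insert htA'] at hsum
        have : ∑ u ∈ A', |c u| ≤ 1 - |a| := by
          have := le_trans hsum hle
          linarith
        rw [h1]; rw [hmdef]; exact this
      -- scaled pieces
      set df := (m⁻¹ : ℝ) • cf with hdf
      set dt := (m⁻¹ : ℝ) • ct with hdt
      have hnorm_d : ∀ (b : Bool) (cb : TreeNode →₀ ℝ), treeNorm cb ≤ m →
          treeNorm ((m⁻¹ : ℝ) • cb) ≤ 1 := by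
        intro b cb hcb
        refine le_trans (treeNorm_smul_le _ _) ?_
        rw [abs_of_pos (inv_pos.2 hmpos)]
        rw [← mul_le_mul_iff_right₀ hmpos, mul_one, ← mul_assoc, mul_inv_cancel₀ (ne_of_gt hmpos),
          one_mul]
        exact hcb
      have hdmem : ∀ (b : Bool), ((m⁻¹ : ℝ) • Finsupp.filter (fun s => (t ++ [b]) <+: s) c)
          ∈ convexHull ℝ {v | SignVec (t ++ [b]) v} := by
        intro b
        refine IH (t ++ [b]) _ ?_ (hnorm_d b _ (hpiece b))
        intro s hs
        have hs1 : s ∈ (Finsupp.filter (fun s => (t ++ [b]) <+: s) c).support :=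
          Finsupp.support_smul hs
        rw [Finsupp.support_filter, Finset.mem_filter] at hs1
        refine ⟨hs1.2, ?_⟩
        have := (hsupp s hs1.1).2
        simp only [List.length_append, List.length_cons, List.length_nil]
        omega
      have hdf_mem := hdmem false
      have hdt_mem := hdmem true
      rw [← hcf] at hdf_mem
      rw [← hct] at hdt_mem
      rw [← hdf] at hdf_mem
      rw [← hdt] at hdt_mem
      -- sum of the two scaled pieces is in the hull at t
      have hsum_mem : df + dt ∈ convexHull ℝ {v | SignVec t v} := by
        have h1 : df + dt ∈ convexHull ℝ {v | SignVec (t ++ [false]) v} +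
            convexHull ℝ {v | SignVec (t ++ [true]) v} :=
          Set.add_mem_add hdf_mem hdt_mem
        rw [← convexHull_add] at h1
        refine convexHull_mono ?_ h1
        rintro x ⟨vf, hvf, vt, hvt, rfl⟩
        exact signVec_add hvf hvt
      -- the sign vector at t
      set g : ℝ := if 0 ≤ a then 1 else -1 with hg
      have hgabs : |g| = 1 := by
        rw [hg]; split <;> norm_num
      have hag : |a| * g = a := by
        rw [hg]; split
        · rw [mul_one]; exact abs_of_nonneg ‹_›
        · rw [mul_neg_one]; rw [abs_of_neg (by linarith [not_le.1 ‹¬ 0 ≤ a›])]; ring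
      have hw_mem : (Finsupp.single t g : TreeNode →₀ ℝ) ∈ convexHull ℝ {v | SignVec t v} :=
        subset_convexHull ℝ _ (signVec_single t hgabs)
      have hfinal := (convex_convexHull ℝ {v | SignVec t v}) hw_mem hsum_mem
        (abs_nonneg a) (le_of_lt hmpos) (by rw [hmdef]; ring)
      have heq : |a| • (Finsupp.single t g : TreeNode →₀ ℝ) + m • (df + dt) = c := by
        rw [smul_add, hdf, hdt, smul_smul, smul_smul, mul_inv_cancel₀ (ne_of_gt hmpos),
          one_smul, one_smul, Finsupp.smul_single, smul_eq_mul, hag, hdec]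
        abel
      rwa [heq] at hfinal

end
end TreeAux

namespace TreeAux
noncomputable section
open Finset

lemma treeNorm_signVec {v : TreeNode →₀ ℝ} (hv : SignVec [] v) : treeNorm v = 1 := by
  classical
  obtain ⟨α, _, h2, h3, h4, h5⟩ := hv
  refine le_antisymm ?_ ?_
  · refine treeNorm_le fun A hA => ?_
    have hsub : ∀ u ∈ A, u ∉ α → |v u| = 0 := fun u _ hu => by rw [h5 u hu, abs_zero]
    have h1 : ∑ u ∈ A, |v u| = ∑ u ∈ A.filter (· ∈ α), |v u| := by
      refine (Finset.sum_subset (Finset.filter_subset _ _) ?_).symm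
      intro u hu hun
      exact hsub u hu (fun h => hun (Finset.mem_filter.2 ⟨hu, h⟩))
    rw [h1]
    have hcard : (A.filter (· ∈ α)).card ≤ 1 := by
      refine Finset.card_le_one.2 ?_
      intro x hx y hy
      rw [Finset.mem_filter] at hx hy
      rcases hA x hx.1 y hy.1 with h | h
      · exact h2 x hx.2 y hy.2 h
      · exact (h2 y hy.2 x hx.2 h).symm
    have : ∑ u ∈ A.filter (· ∈ α), |v u| = (A.filter (· ∈ α)).card := by
      rw [Finset.sum_congr rfl (fun u hu => h4 u (Finset.mem_filter.1 hu).2)]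
      simp
    rw [this]
    exact_mod_cast hcard
  · obtain ⟨s, hs, _⟩ := h3 []
    have := abs_le_treeNorm v s
    rw [h4 s hs] at this
    exact this

lemma abs_sub_sign {x ε : ℝ} (hx : |x| ≤ 1) (hε : |ε| = 1) : |x - ε| = 1 - ε * x := by
  rcases (abs_eq (by norm_num : (0:ℝ) ≤ 1)).1 hε with rfl | rfl
  · rw [abs_of_nonpos (by cases abs_le.1 hx; linarith)]; ring
  · rw [abs_of_nonneg (by cases abs_le.1 hx; linarith)]; ring

/-- Key quantitative bound: if `v` is a sign vector at the root with antichain `α` and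
`treeNorm c ≤ 1`, then `treeNorm (c - v) ≤ 2 ∑_{s ∈ α} (1 - v s * c s)`. -/
lemma key_bound {v : TreeNode →₀ ℝ} {α : Finset TreeNode}
    (h2 : ∀ s ∈ α, ∀ s' ∈ α, s <+: s' → s = s')
    (h3 : ∀ l : List Bool, ∃ s ∈ α, s <+: l ∨ l <+: s)
    (h4 : ∀ s ∈ α, |v s| = 1) (h5 : ∀ s, s ∉ α → v s = 0)
    {c : TreeNode →₀ ℝ} (hc : treeNorm c ≤ 1) :
    treeNorm (c - v) ≤ 2 * ∑ s ∈ α, (1 - v s * c s) := by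
  classical
  have hterm : ∀ s ∈ α, 0 ≤ 1 - v s * c s := by
    intro s hs
    have h1 : v s * c s ≤ |v s * c s| := le_abs_self _
    have h2' : |v s * c s| = |c s| := by rw [abs_mul, h4 s hs, one_mul]
    have := abs_le_treeNorm c s
    nlinarith
  refine treeNorm_le fun A hA => ?_
  rcases A.eq_empty_or_nonempty with rfl | hAne
  · simp only [Finset.sum_empty]
    have := Finset.sum_nonneg hterm
    linarith
  · obtain ⟨u₀, hu₀, hmax⟩ := A.exists_max_image (fun u => u.length) hAne
    have hall : ∀ u ∈ A, u <+: u₀ := by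
      intro u hu
      rcases hA u hu u₀ hu₀ with h | h
      · exact h
      · cases h.eq_of_length (le_antisymm h.length_le (hmax u hu))
        exact List.prefix_refl _
    obtain ⟨s, hsα, hcomp⟩ := h3 u₀
    have hchain : IsFinChain (insert s A) := by
      intro x hx y hy
      rcases Finset.mem_insert.1 hx with rfl | hx' <;>
        rcases Finset.mem_insert.1 hy with rfl | hy'
      · exact Or.inl (List.prefix_refl _)
      · rcases hcomp with h | h
        · exact List.prefix_or_prefix_of_prefix h (hall y hy')
        · exact Or.inr ((hall y hy').trans h)
      · rcases hcomp with h | h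
        · exact (List.prefix_or_prefix_of_prefix h (hall x hx')).symm
        · exact Or.inl ((hall x hx').trans h)
      · exact hA x hx' y hy'
    have hins : ∀ u ∈ insert s A, u ∈ α → u = s := by
      intro u hu huα
      rcases hchain u hu s (Finset.mem_insert_self s A) with h | h
      · exact h2 u huα s hsα h
      · exact (h2 s hsα u huα h).symm
    have step1 : ∑ u ∈ A, |(c - v) u| ≤ ∑ u ∈ insert s A, |(c - v) u| :=
      Finset.sum_le_sum_of_subset_of_nonneg (Finset.subset_insert s A)
        (fun _ _ _ => abs_nonneg _)
    have hsmem : s ∈ insert s A := Finset.mem_insert_self s A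
    have step2 : ∑ u ∈ insert s A, |(c - v) u| =
        |(c - v) s| + ∑ u ∈ (insert s A).erase s, |(c - v) u| :=
      (Finset.add_sum_erase _ _ hsmem).symm
    have step3 : ∑ u ∈ (insert s A).erase s, |(c - v) u| =
        ∑ u ∈ (insert s A).erase s, |c u| := by
      refine Finset.sum_congr rfl fun u hu => ?_
      have hune : u ≠ s := (Finset.mem_erase.1 hu).1
      have huA : u ∈ insert s A := (Finset.mem_erase.1 hu).2
      have : u ∉ α := fun h => hune (hins u huA h)
      rw [Finsupp.sub_apply, h5 u this, sub_zero]
    have step4 : |c s| + ∑ u ∈ (insert s A).erase s, |c u| ≤ 1 := by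
      have := chain_sum_le_treeNorm (c := c) hchain
      rw [← Finset.add_sum_erase _ _ hsmem] at this
      linarith
    have hcs : |c s| ≤ 1 := le_trans (abs_le_treeNorm c s) hc
    have step5 : |(c - v) s| = 1 - v s * c s := by
      rw [Finsupp.sub_apply]
      exact abs_sub_sign hcs (h4 s hsα)
    have step6 : 1 - |c s| ≤ 1 - v s * c s := by
      have h1 : v s * c s ≤ |v s * c s| := le_abs_self _
      have h2' : |v s * c s| = |c s| := by rw [abs_mul, h4 s hsα, one_mul]
      linarith
    have step7 : (1 : ℝ) - v s * c s ≤ ∑ s' ∈ α, (1 - v s' * c s') :=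
      Finset.single_le_sum hterm hsα
    calc ∑ u ∈ A, |(c - v) u| ≤ |(c - v) s| + ∑ u ∈ (insert s A).erase s, |(c - v) u| := by
          rw [← step2]; exact step1
      _ = (1 - v s * c s) + ∑ u ∈ (insert s A).erase s, |c u| := by rw [step3, step5]
      _ ≤ (1 - v s * c s) + (1 - |c s|) := by linarith
      _ ≤ (1 - v s * c s) + (1 - v s * c s) := by linarith
      _ = 2 * (1 - v s * c s) := by ring
      _ ≤ 2 * ∑ s' ∈ α, (1 - v s' * c s') := by linarith

end
end TreeAux

namespace TreeAux
noncomputable section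
open Finset Metric Filter Topology

variable {X : Type*} [NormedAddCommGroup X] [NormedSpace ℝ X] [CompleteSpace X]

lemma T_injective (e : TreeNode → X)
    (hnorm : ∀ c, ‖Finsupp.linearCombination ℝ e c‖ = treeNorm c) :
    Function.Injective (Finsupp.linearCombination ℝ e) := by
  set T := Finsupp.linearCombination ℝ e with hT
  have hzero : ∀ c, T c = 0 → c = 0 := by
    intro c h
    ext s
    have h1 : |c s| ≤ treeNorm c := abs_le_treeNorm c s
    rw [← hnorm, h, norm_zero] at h1
    have := abs_nonneg (c s)
    have : |c s| = 0 := le_antisymm h1 this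
    simpa using this
  intro a b hab
  have : T (a - b) = 0 := by rw [map_sub, hab, sub_self]
  have := hzero _ this
  exact sub_eq_zero.1 this

lemma dense_ball (e : TreeNode → X)
    (hnorm : ∀ c, ‖Finsupp.linearCombination ℝ e c‖ = treeNorm c)
    (hdense : DenseRange (Finsupp.linearCombination ℝ e)) :
    closedBall (0 : X) 1 ⊆
      closure {y : X | ∃ c : TreeNode →₀ ℝ, treeNorm c ≤ 1 ∧
        Finsupp.linearCombination ℝ e c = y} := by
  set T := Finsupp.linearCombination ℝ e with hT
  intro y hy
  have hyn : ‖y‖ ≤ 1 := mem_closedBall_zero_iff.1 hy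
  rw [Metric.mem_closure_iff]
  intro ε hε
  set θ := min (ε/3) 1 with hθ
  have hθpos : 0 < θ := lt_min (by linarith) one_pos
  have hθ1 : θ ≤ 1 := min_le_right _ _
  have hθε : θ ≤ ε/3 := min_le_left _ _
  obtain ⟨c, hc⟩ := hdense.exists_dist_lt ((1-θ) • y) hθpos
  refine ⟨T c, ⟨c, ?_, rfl⟩, ?_⟩
  · rw [← hnorm]
    have h1 : ‖T c‖ ≤ ‖T c - (1-θ) • y‖ + ‖(1-θ) • y‖ := by
      have := norm_add_le (T c - (1-θ) • y) ((1-θ) • y)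
      rwa [sub_add_cancel] at this
    have h2 : ‖T c - (1-θ) • y‖ < θ := by
      rw [← dist_eq_norm, dist_comm]
      exact hc
    have h3 : ‖(1-θ) • y‖ ≤ 1 - θ := by
      rw [norm_smul, Real.norm_eq_abs, abs_of_nonneg (by linarith)]
      nlinarith
    linarith
  · have h1 : dist y (T c) ≤ dist y ((1-θ) • y) + dist ((1-θ) • y) (T c) := dist_triangle _ _ _
    have h2 : dist y ((1-θ) • y) ≤ θ := by
      rw [dist_eq_norm]
      have : y - (1-θ) • y = θ • y := by
        rw [← one_smul ℝ y, smul_smul, ← sub_smul]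
        congr 1
        · simp
        · simp [smul_smul]
      rw [this, norm_smul, Real.norm_eq_abs, abs_of_pos hθpos]
      nlinarith
    linarith

lemma strongly_exposed_signVec (e : TreeNode → X)
    (hnorm : ∀ c, ‖Finsupp.linearCombination ℝ e c‖ = treeNorm c)
    (hdense : DenseRange (Finsupp.linearCombination ℝ e))
    {v : TreeNode →₀ ℝ} (hv : SignVec [] v) :
    StronglyExposedPoint (closedBall (0 : X) 1) (Finsupp.linearCombination ℝ e v) := by
  classical
  set T := Finsupp.linearCombination ℝ e with hT
  obtain ⟨α, h1, h2, h3, h4, h5⟩ := hv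
  have h3' : ∀ l : List Bool, ∃ s ∈ α, s <+: l ∨ l <+: s := h3
  set N : ℝ := (α.card : ℝ) with hN
  -- the linear functional on finitely supported functions
  set f₀ : (TreeNode →₀ ℝ) →ₗ[ℝ] ℝ :=
    { toFun := fun c => ∑ s ∈ α, v s * c s
      map_add' := fun x y => by
        simp [Finsupp.add_apply, mul_add, Finset.sum_add_distrib]
      map_smul' := fun r x => by
        simp only [Finsupp.smul_apply, smul_eq_mul, RingHom.id_apply]
        rw [Finset.mul_sum]
        exact Finset.sum_congr rfl fun s _ => by ring } with hf₀
  have hf₀apply : ∀ c : TreeNode →₀ ℝ, f₀ c = ∑ s ∈ α, v s * c s := fun c => rfl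
  have hf₀bound : ∀ c : TreeNode →₀ ℝ, |f₀ c| ≤ N * treeNorm c := by
    intro c
    rw [hf₀apply]
    calc |∑ s ∈ α, v s * c s| ≤ ∑ s ∈ α, |v s * c s| := Finset.abs_sum_le_sum_abs _ _
      _ ≤ ∑ s ∈ α, treeNorm c := by
          refine Finset.sum_le_sum fun s hs => ?_
          rw [abs_mul, h4 s hs, one_mul]
          exact abs_le_treeNorm c s
      _ = N * treeNorm c := by rw [Finset.sum_const, nsmul_eq_mul]
  have hTinj : Function.Injective T := T_injective e hnorm
  set E := LinearMap.range T with hE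
  set equiv := LinearEquiv.ofInjective T hTinj with hequiv
  have hval : ∀ x : E, (x : X) = T (equiv.symm x) := by
    intro x
    have := equiv.apply_symm_apply x
    conv_lhs => rw [← this]
    rw [hequiv]
    exact (LinearEquiv.ofInjective_apply T (equiv.symm x))
  set g : E →ₗ[ℝ] ℝ := f₀.comp equiv.symm.toLinearMap with hg
  have hgbound : ∀ x : E, ‖g x‖ ≤ N * ‖x‖ := by
    intro x
    have h1 : ‖g x‖ = |f₀ (equiv.symm x)| := rfl
    have h2 : ‖(x : X)‖ = treeNorm (equiv.symm x) := by rw [hval x, hnorm]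
    rw [h1]
    calc |f₀ (equiv.symm x)| ≤ N * treeNorm (equiv.symm x) := hf₀bound _
      _ = N * ‖(x : X)‖ := by rw [h2]
      _ = N * ‖x‖ := rfl
  set gc : E →L[ℝ] ℝ := g.mkContinuous N hgbound with hgc
  have hdenseE : DenseRange ⇑(E.subtypeL) := by
    unfold DenseRange
    have hr : Set.range (⇑(E.subtypeL)) = (E : Set X) := Subtype.range_coe
    have hrT : (E : Set X) = Set.range ⇑T := LinearMap.coe_range T
    rw [hr, hrT]
    exact hdense
  have hUI : IsUniformInducing ((↑) : E → X) := isometry_subtype_coe.isUniformInducing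
  set f : X →L[ℝ] ℝ := gc.extend E.subtypeL with hf
  have hfeq : ∀ c : TreeNode →₀ ℝ, f (T c) = f₀ c := by
    intro c
    have hmem : T c ∈ E := LinearMap.mem_range_self T c
    have hx : T c = E.subtypeL (⟨T c, hmem⟩ : E) := rfl
    rw [hf, hx, ContinuousLinearMap.extend_eq gc hdenseE hUI]
    have hsym : equiv.symm (⟨T c, hmem⟩ : E) = c := by
      apply hTinj
      rw [← hval ⟨T c, hmem⟩]
    show g (⟨T c, hmem⟩ : E) = f₀ c
    rw [hg]
    show f₀ (equiv.symm ⟨T c, hmem⟩) = f₀ c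
    rw [hsym]
  -- value at v
  have hfv : f (T v) = N := by
    rw [hfeq, hf₀apply]
    have : ∀ s ∈ α, v s * v s = 1 := by
      intro s hs
      have hh := h4 s hs
      rw [← abs_mul_abs_self (v s), hh, mul_one]
    rw [Finset.sum_congr rfl this]
    simp [hN]
  -- key inequality on the dense subset
  have key2 : ∀ c : TreeNode →₀ ℝ, treeNorm c ≤ 1 →
      ‖T c - T v‖ ≤ 2 * (N - f (T c)) := by
    intro c hc
    rw [← map_sub, hnorm, hfeq]
    have hkb := key_bound h2 h3' h4 h5 hc
    have hsum : ∑ s ∈ α, (1 - v s * c s) = N - f₀ c := by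
      rw [Finset.sum_sub_distrib, Finset.sum_const, nsmul_eq_mul, mul_one, hf₀apply]
    rw [hsum] at hkb
    exact hkb
  -- extend to the whole ball by density
  have hball : ∀ y ∈ closedBall (0 : X) 1, ‖y - T v‖ ≤ 2 * (N - f y) := by
    have hKclosed : IsClosed {y : X | ‖y - T v‖ ≤ 2 * (N - f y)} := by
      refine isClosed_le ?_ ?_
      · exact (continuous_id.sub continuous_const).norm
      · exact continuous_const.mul (continuous_const.sub f.continuous)
    have hsub : {y : X | ∃ c : TreeNode →₀ ℝ, treeNorm c ≤ 1 ∧ T c = y} ⊆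
        {y : X | ‖y - T v‖ ≤ 2 * (N - f y)} := by
      rintro y ⟨c, hc, rfl⟩
      exact key2 c hc
    intro y hy
    exact hKclosed.closure_subset_iff.2 hsub (dense_ball e hnorm hdense hy)
  -- T v is in the ball
  have hvmem : T v ∈ closedBall (0 : X) 1 := by
    rw [mem_closedBall_zero_iff, hnorm, treeNorm_signVec ⟨α, h1, h2, h3, h4, h5⟩]
  refine ⟨hvmem, f, ?_, ?_⟩
  · intro y hy
    have := hball y hy
    have h0 : (0:ℝ) ≤ ‖y - T v‖ := norm_nonneg _
    rw [hfv]
    linarith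
  · intro xn hxn htend
    rw [hfv] at htend
    rw [tendsto_iff_norm_sub_tendsto_zero]
    have hle : ∀ n, ‖xn n - T v‖ ≤ 2 * (N - f (xn n)) := fun n => hball (xn n) (hxn n)
    have htend2 : Tendsto (fun n => 2 * (N - f (xn n))) atTop (𝓝 0) := by
      have := (htend.const_sub N).const_mul 2
      simpa using this
    exact squeeze_zero (fun n => norm_nonneg _) hle htend2

end
end TreeAux

namespace TreeAux
noncomputable section
open Finset Metric Filter Topology

lemma denting_of_stronglyExposed {X : Type*} [NormedAddCommGroup X] [NormedSpace ℝ X]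
    {A : Set X} {x : X} (h : StronglyExposedPoint A x) : DentingPoint A x := by
  obtain ⟨hxA, f, hmax, hse⟩ := h
  have hbdd : ∀ r ∈ ⇑f '' A, r ≤ f x := by
    rintro _ ⟨y, hy, rfl⟩; exact hmax y hy
  have hsup : sSup (⇑f '' A) = f x :=
    le_antisymm (csSup_le ⟨f x, Set.mem_image_of_mem f hxA⟩ hbdd)
      (le_csSup ⟨f x, hbdd⟩ (Set.mem_image_of_mem f hxA))
  refine ⟨hxA, ?_⟩
  intro ε hε
  by_contra hcon
  push_neg at hcon
  have hslice : ∀ δ : ℝ, 0 < δ → x ∈ ballSlice A f δ := by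
    intro δ hδ
    exact ⟨hxA, by rw [hsup]; linarith⟩
  have hex : ∀ k : ℕ, ∃ y z : X, y ∈ ballSlice A f (1/((k:ℝ)+1)) ∧
      z ∈ ballSlice A f (1/((k:ℝ)+1)) ∧ ε < dist y z := by
    intro k
    have hδ : (0:ℝ) < 1/((k:ℝ)+1) := by positivity
    have hnd := hcon f (1/((k:ℝ)+1)) hδ (hslice _ hδ)
    by_contra hc2
    push_neg at hc2
    exact absurd (Metric.diam_le_of_forall_dist_le hε.le fun y hy z hz => hc2 y z hy hz)
      (not_le.2 hnd)
  choose y z hy hz hd using hex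
  have hlow : Tendsto (fun k : ℕ => f x - 1/((k:ℝ)+1)) atTop (𝓝 (f x)) := by
    have h0 := tendsto_one_div_add_atTop_nhds_zero_nat (𝕜 := ℝ)
    have := (tendsto_const_nhds (α := ℕ) (x := f x) (f := atTop)).sub h0
    simpa using this
  have hfy : Tendsto (fun k => f (y k)) atTop (𝓝 (f x)) := by
    refine tendsto_of_tendsto_of_tendsto_of_le_of_le hlow tendsto_const_nhds ?_ ?_
    · intro k
      have h2 := (hy k).2
      rw [hsup] at h2
      linarith
    · intro k
      exact hmax _ (hy k).1
  have hfz : Tendsto (fun k => f (z k)) atTop (𝓝 (f x)) := by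
    refine tendsto_of_tendsto_of_tendsto_of_le_of_le hlow tendsto_const_nhds ?_ ?_
    · intro k
      have h2 := (hz k).2
      rw [hsup] at h2
      linarith
    · intro k
      exact hmax _ (hz k).1
  have hty := hse y (fun k => (hy k).1) hfy
  have htz := hse z (fun k => (hz k).1) hfz
  have hdist : Tendsto (fun k => dist (y k) (z k)) atTop (𝓝 0) := by
    have := hty.dist htz
    rwa [dist_self] at this
  obtain ⟨k, hk⟩ := (hdist.eventually_lt_const hε).exists
  exact absurd (hd k) (not_lt.2 hk.le)

end
end TreeAux


/-- **`B_{X_T}` is dentable.** In the binary tree space, the closed unit ball is the closed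
convex hull of its strongly exposed points; in particular it is the closed convex hull of its
denting points, i.e. it is dentable. -/
theorem binary_tree_ball_dentable {X : Type*} [NormedAddCommGroup X]
    [NormedSpace ℝ X] [CompleteSpace X] (e : TreeNode → X)
    (hnorm : ∀ c : TreeNode →₀ ℝ, ‖c.sum fun t a => a • e t‖ = treeNorm c)
    (hdense : DenseRange fun c : TreeNode →₀ ℝ => c.sum fun t a => a • e t) :
    closure (convexHull ℝ {x | StronglyExposedPoint (closedBall (0 : X) 1) x}) =
      closedBall (0 : X) 1 ∧
    closure (convexHull ℝ {x | DentingPoint (closedBall (0 : X) 1) x}) =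
      closedBall (0 : X) 1 := by
  classical
  open TreeAux in
  have hTfun : (fun c : TreeNode →₀ ℝ => c.sum fun t a => a • e t) =
      ⇑(Finsupp.linearCombination ℝ e) := by
    funext c
    rw [Finsupp.linearCombination_apply]
  have hnorm' : ∀ c : TreeNode →₀ ℝ, ‖Finsupp.linearCombination ℝ e c‖ = treeNorm c := by
    intro c
    rw [Finsupp.linearCombination_apply]
    exact hnorm c
  have hdense' : DenseRange ⇑(Finsupp.linearCombination ℝ e) := hTfun ▸ hdense
  set T := Finsupp.linearCombination ℝ e with hT
  set SE := {x | StronglyExposedPoint (closedBall (0 : X) 1) x} with hSE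
  set DP := {x | DentingPoint (closedBall (0 : X) 1) x} with hDP
  have hSEsub : (⇑T) '' {v : TreeNode →₀ ℝ | TreeAux.SignVec [] v} ⊆ SE := by
    rintro _ ⟨v, hv, rfl⟩
    exact TreeAux.strongly_exposed_signVec e hnorm' hdense' hv
  have hhull : {y : X | ∃ c : TreeNode →₀ ℝ, treeNorm c ≤ 1 ∧ T c = y} ⊆
      convexHull ℝ SE := by
    rintro y ⟨c, hc, rfl⟩
    have hcond : ∀ s ∈ c.support, ([] : TreeNode) <+: s ∧
        s.length < ([] : TreeNode).length + (c.support.sup List.length + 1) := by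
      intro s hs
      refine ⟨List.nil_prefix, ?_⟩
      have := Finset.le_sup (f := List.length) hs
      simp only [List.length_nil]
      omega
    have hmemhull := TreeAux.mem_hull_of_treeNorm_le (c.support.sup List.length + 1) [] c hcond hc
    have himg := Set.mem_image_of_mem ⇑T hmemhull
    rw [T.image_convexHull] at himg
    exact convexHull_mono hSEsub himg
  have hSEball : SE ⊆ closedBall (0 : X) 1 := fun x hx => hx.1
  have hDPball : DP ⊆ closedBall (0 : X) 1 := fun x hx => hx.1
  have hfirst : closure (convexHull ℝ SE) = closedBall (0 : X) 1 := by
    refine Set.Subset.antisymm ?_ ?_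
    · exact closure_minimal (convexHull_min hSEball (convex_closedBall _ _)) isClosed_closedBall
    · intro y hy
      exact closure_mono hhull (TreeAux.dense_ball e hnorm' hdense' hy)
  refine ⟨hfirst, ?_⟩
  have hSEDP : SE ⊆ DP := fun x hx => TreeAux.denting_of_stronglyExposed hx
  refine Set.Subset.antisymm ?_ ?_
  · exact closure_minimal (convexHull_min hDPball (convex_closedBall _ _)) isClosed_closedBall
  · rw [← hfirst]
    exact closure_mono (convexHull_mono hSEDP)
end

section
/- The binary tree space X_T has the alternative Daugavet property: for every x in the unit sphere of X_T and every slice S of the closed unit ball B_{X_T}, sup_{y∈S} max_{θ∈{-1,1}} ‖x + θy‖ = 2. -/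
open Metric Filter Topology

/-!
The tree norm satisfies `‖c‖ = |c []| + max ‖c₀‖ ‖c₁‖`, where `c₀`, `c₁` are the restrictions
of `c` to the two subtrees below the root. Inducting along this recursion one shows, for the
vectors `z` that are `±1` on a finite maximal antichain and `0` elsewhere:
* every linear functional `F` has `F c ≤ ‖c‖ F z` for such a `z` with `F z ≥ 0`, so every slice
  of the ball contains one;
* `‖d‖ + 1 ≤ max ‖d + z‖ ‖d - z‖`, because at a node of the antichain one of `|a ± θ|` is
  `|a| + 1`.
Both pass from the finitely supported vectors to the whole space by density, and for `‖x‖ = 1`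
the second gives `max ‖x + z‖ ‖x - z‖ = 2`.
-/

lemma abs_add_abs_le_max_abs_add_abs_sub (a b : ℝ) : |a| + |b| ≤ max |a + b| |a - b| := by
  grind

def consEmb (b : Bool) : TreeNode ↪ TreeNode := ⟨List.cons b, List.cons_injective⟩

lemma IsFinChain.insert_nil_map_consEmb {C : Finset TreeNode} (hC : IsFinChain C) (b : Bool) :
    IsFinChain (insert [] (C.map (consEmb b))) := by
  simp only [IsFinChain, Finset.mem_insert, Finset.mem_map, consEmb, Function.Embedding.coeFn_mk]
  rintro _ (rfl | ⟨s, hs, rfl⟩) _ (rfl | ⟨t, ht, rfl⟩)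
  · simp
  · simp
  · simp
  · simpa [List.cons_prefix_cons] using hC _ hs _ ht

lemma IsFinChain.preimage_cons {A : Finset TreeNode} (hA : IsFinChain A) (b : Bool) :
    IsFinChain (A.preimage (List.cons b) List.cons_injective.injOn) := fun s hs t ht => by
  simpa [List.cons_prefix_cons] using hA _ (Finset.mem_preimage.mp hs) _ (Finset.mem_preimage.mp ht)

lemma IsFinChain.exists_subset_insert_nil {A : Finset TreeNode} (hA : IsFinChain A) :
    ∃ b, A ⊆ insert [] ((A.preimage (List.cons b) List.cons_injective.injOn).map (consEmb b)) := by
  obtain ⟨b, hb⟩ : ∃ b : Bool, ∀ b' s, b' :: s ∈ A → b' = b := by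
    by_cases h : ∃ b s, b :: s ∈ A
    · obtain ⟨b, s, hs⟩ := h
      refine ⟨b, fun b' s' hs' => ?_⟩
      rcases hA _ hs' _ hs with h | h
      exacts [(List.cons_prefix_cons.mp h).1, (List.cons_prefix_cons.mp h).1.symm]
    · push Not at h
      exact ⟨false, fun b' s hs => absurd hs (h b' s)⟩
  refine ⟨b, fun t ht => ?_⟩
  rcases t with _ | ⟨b', s⟩
  · simp
  · obtain rfl := hb b' s ht
    simp [consEmb, ht]

namespace BinaryTree

lemma sum_le_treeNorm (c : TreeNode →₀ ℝ) {A : Finset TreeNode} (hA : IsFinChain A) :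
    ∑ t ∈ A, |c t| ≤ treeNorm c := by
  refine le_csSup ⟨∑ t ∈ c.support, |c t|, ?_⟩ ⟨A, hA, rfl⟩
  rintro _ ⟨B, -, rfl⟩
  rw [← Finset.sum_filter_ne_zero]
  refine Finset.sum_le_sum_of_subset_of_nonneg (fun t ht => ?_) fun _ _ _ => abs_nonneg _
  simpa using (Finset.mem_filter.mp ht).2

lemma treeNorm_le {c : TreeNode →₀ ℝ} {r : ℝ}
    (h : ∀ A : Finset TreeNode, IsFinChain A → ∑ t ∈ A, |c t| ≤ r) : treeNorm c ≤ r :=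
  csSup_le ⟨0, ∅, by simp [IsFinChain]⟩ (by rintro _ ⟨A, hA, rfl⟩; exact h A hA)

lemma treeNorm_nonneg (c : TreeNode →₀ ℝ) : 0 ≤ treeNorm c := by
  simpa using sum_le_treeNorm c (A := ∅) (by simp [IsFinChain])

@[simp] lemma treeNorm_zero : treeNorm 0 = 0 :=
  le_antisymm (treeNorm_le fun _ _ => by simp) (treeNorm_nonneg 0)

noncomputable def subtree (b : Bool) (c : TreeNode →₀ ℝ) : TreeNode →₀ ℝ :=
  c.comapDomain (List.cons b) List.cons_injective.injOn

@[simp] lemma subtree_apply (b : Bool) (c : TreeNode →₀ ℝ) (s : TreeNode) :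
    subtree b c s = c (b :: s) := rfl

lemma sum_insert_nil_map_consEmb (c : TreeNode →₀ ℝ) (b : Bool) (C : Finset TreeNode) :
    ∑ t ∈ insert [] (C.map (consEmb b)), |c t| = |c []| + ∑ s ∈ C, |subtree b c s| := by
  rw [Finset.sum_insert (by simp [consEmb]), Finset.sum_map]
  rfl

theorem treeNorm_eq_abs_add_max (c : TreeNode →₀ ℝ) :
    treeNorm c = |c []| + max (treeNorm (subtree false c)) (treeNorm (subtree true c)) := by
  have max_ge (b : Bool) : treeNorm (subtree b c) ≤
      max (treeNorm (subtree false c)) (treeNorm (subtree true c)) := by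
    cases b
    exacts [le_max_left _ _, le_max_right _ _]
  refine le_antisymm (treeNorm_le fun A hA => ?_) ?_
  · obtain ⟨b, hAb⟩ := hA.exists_subset_insert_nil
    calc ∑ t ∈ A, |c t|
        ≤ ∑ t ∈ insert [] ((A.preimage _ _).map (consEmb b)), |c t| :=
          Finset.sum_le_sum_of_subset_of_nonneg hAb fun _ _ _ => abs_nonneg _
      _ ≤ |c []| + treeNorm (subtree b c) := by
          rw [sum_insert_nil_map_consEmb]
          gcongr
          exact sum_le_treeNorm _ (hA.preimage_cons b)
      _ ≤ _ := by gcongr; exact max_ge b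
  · rw [← le_sub_iff_add_le', max_le_iff]
    refine ⟨?_, ?_⟩ <;> refine treeNorm_le fun C hC => le_sub_iff_add_le'.mpr ?_ <;>
      rw [← sum_insert_nil_map_consEmb] <;> exact sum_le_treeNorm _ (hC.insert_nil_map_consEmb _)

noncomputable def treeCons (a : ℝ) (c₀ c₁ : TreeNode →₀ ℝ) : TreeNode →₀ ℝ :=
  Finsupp.single [] a + c₀.mapDomain (List.cons false) + c₁.mapDomain (List.cons true)

section treeCons

variable (a : ℝ) (c₀ c₁ : TreeNode →₀ ℝ)

@[simp] lemma treeCons_apply_nil : treeCons a c₀ c₁ [] = a := by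
  simp [treeCons, Finsupp.mapDomain_of_notMem_range]

@[simp] lemma treeCons_apply_cons_false (s : TreeNode) : treeCons a c₀ c₁ (false :: s) = c₀ s := by
  simp [treeCons, Finsupp.mapDomain_of_notMem_range, Finsupp.mapDomain_apply List.cons_injective]

@[simp] lemma treeCons_apply_cons_true (s : TreeNode) : treeCons a c₀ c₁ (true :: s) = c₁ s := by
  simp [treeCons, Finsupp.mapDomain_of_notMem_range, Finsupp.mapDomain_apply List.cons_injective]

@[simp] lemma subtree_false_treeCons : subtree false (treeCons a c₀ c₁) = c₀ := by
  ext; simp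

@[simp] lemma subtree_true_treeCons : subtree true (treeCons a c₀ c₁) = c₁ := by
  ext; simp

lemma treeCons_zero_zero : treeCons a 0 0 = Finsupp.single [] a := by
  simp [treeCons]

lemma treeCons_add_treeCons (a' : ℝ) (c₀' c₁' : TreeNode →₀ ℝ) :
    treeCons a c₀ c₁ + treeCons a' c₀' c₁' = treeCons (a + a') (c₀ + c₀') (c₁ + c₁') := by
  ext (_ | ⟨_ | _, s⟩) <;> simp

lemma treeCons_sub_treeCons (a' : ℝ) (c₀' c₁' : TreeNode →₀ ℝ) :
    treeCons a c₀ c₁ - treeCons a' c₀' c₁' = treeCons (a - a') (c₀ - c₀') (c₁ - c₁') := by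
  ext (_ | ⟨_ | _, s⟩) <;> simp

lemma treeNorm_treeCons : treeNorm (treeCons a c₀ c₁) = |a| + max (treeNorm c₀) (treeNorm c₁) := by
  simp [treeNorm_eq_abs_add_max (treeCons a c₀ c₁)]

end treeCons

lemma treeCons_subtree (c : TreeNode →₀ ℝ) :
    treeCons (c []) (subtree false c) (subtree true c) = c := by
  ext (_ | ⟨_ | _, s⟩) <;> simp

lemma exists_eq_treeCons (c : TreeNode →₀ ℝ) : ∃ a c₀ c₁, c = treeCons a c₀ c₁ :=
  ⟨_, _, _, (treeCons_subtree c).symm⟩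

@[elab_as_elim]
theorem tree_induction {P : (TreeNode →₀ ℝ) → Prop} (zero : P 0)
    (step : ∀ c, P (subtree false c) → P (subtree true c) → P c) (c : TreeNode →₀ ℝ) : P c := by
  suffices ∀ n, ∀ c : TreeNode →₀ ℝ, (∀ t ∈ c.support, t.length < n) → P c from
    this _ c fun t ht => Nat.lt_succ_of_le (Finset.le_sup (f := List.length) ht)
  intro n
  induction n with
  | zero =>
    intro c hc
    rwa [Finsupp.support_eq_empty.mp (Finset.eq_empty_of_forall_notMem fun t ht =>
      (hc t ht).not_ge (Nat.zero_le _))]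
  | succ n ih =>
    intro c hc
    exact step c (ih _ fun t ht => Nat.succ_lt_succ_iff.mp (hc (false :: t) (by simpa using ht)))
      (ih _ fun t ht => Nat.succ_lt_succ_iff.mp (hc (true :: t) (by simpa using ht)))

/-- The vectors equal to `±1` on a finite maximal antichain and to `0` elsewhere, generated by
splitting the antichain at the root. -/
inductive IsAntichainSign : (TreeNode →₀ ℝ) → Prop
  | root {θ : ℝ} : |θ| = 1 → IsAntichainSign (Finsupp.single [] θ)
  | node {z₀ z₁ : TreeNode →₀ ℝ} :
      IsAntichainSign z₀ → IsAntichainSign z₁ → IsAntichainSign (treeCons 0 z₀ z₁)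

namespace IsAntichainSign

theorem treeNorm_eq_one {z : TreeNode →₀ ℝ} (hz : IsAntichainSign z) : treeNorm z = 1 := by
  induction hz with
  | root hθ => simp [← treeCons_zero_zero, treeNorm_treeCons, hθ]
  | node _ _ ih₀ ih₁ => simp [treeNorm_treeCons, ih₀, ih₁]

theorem treeNorm_add_one_le {z : TreeNode →₀ ℝ} (hz : IsAntichainSign z) (d : TreeNode →₀ ℝ) :
    treeNorm d + 1 ≤ max (treeNorm (d + z)) (treeNorm (d - z)) := by
  induction hz generalizing d with
  | @root θ hθ =>
    obtain ⟨a, d₀, d₁, rfl⟩ := exists_eq_treeCons d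
    simp only [← treeCons_zero_zero, treeCons_add_treeCons, treeCons_sub_treeCons, add_zero,
      sub_zero, treeNorm_treeCons, max_add_add_right, add_right_comm _ _ (1 : ℝ)]
    gcongr
    simpa [hθ] using abs_add_abs_le_max_abs_add_abs_sub a θ
  | node _ _ ih₀ ih₁ =>
    obtain ⟨a, d₀, d₁, rfl⟩ := exists_eq_treeCons d
    simp only [treeCons_add_treeCons, treeCons_sub_treeCons, add_zero, sub_zero, treeNorm_treeCons,
      max_add_add_left]
    rw [add_assoc, max_max_max_comm, ← max_add_add_right]
    gcongr
    exacts [ih₀ d₀, ih₁ d₁]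

end IsAntichainSign

lemma exists_abs_eq_one_apply_single_le (F : (TreeNode →₀ ℝ) →ₗ[ℝ] ℝ) (a : ℝ) :
    ∃ θ : ℝ, |θ| = 1 ∧ 0 ≤ F (Finsupp.single [] θ) ∧
      F (Finsupp.single [] a) ≤ |a| * F (Finsupp.single [] θ) := by
  have hsingle (x : ℝ) : F (Finsupp.single [] x) = x * F (Finsupp.single [] 1) := by
    rw [← smul_eq_mul, ← map_smul, Finsupp.smul_single', mul_one]
  obtain ⟨θ, hθ, hθF⟩ :
      ∃ θ : ℝ, |θ| = 1 ∧ θ * F (Finsupp.single [] 1) = |F (Finsupp.single [] 1)| := by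
    rcases le_total 0 (F (Finsupp.single [] 1)) with h | h
    exacts [⟨1, by simp, by simp [abs_of_nonneg h]⟩, ⟨-1, by simp, by simp [abs_of_nonpos h]⟩]
  refine ⟨θ, hθ, by rw [hsingle θ, hθF]; positivity, ?_⟩
  rw [hsingle a, hsingle θ, hθF, ← abs_mul]
  exact le_abs_self _

theorem exists_isAntichainSign_le (F : (TreeNode →₀ ℝ) →ₗ[ℝ] ℝ) (c : TreeNode →₀ ℝ) :
    ∃ z, IsAntichainSign z ∧ 0 ≤ F z ∧ F c ≤ treeNorm c * F z := by
  induction c using tree_induction generalizing F with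
  | zero =>
    obtain ⟨θ, hθ, hFθ, -⟩ := exists_abs_eq_one_apply_single_le F 0
    exact ⟨_, .root hθ, hFθ, by simp⟩
  | step c ih₀ ih₁ =>
    set F₀ := F ∘ₗ Finsupp.lmapDomain ℝ ℝ (List.cons false)
    set F₁ := F ∘ₗ Finsupp.lmapDomain ℝ ℝ (List.cons true)
    have hF (a : ℝ) (c₀ c₁ : TreeNode →₀ ℝ) :
        F (treeCons a c₀ c₁) = F (Finsupp.single [] a) + F₀ c₀ + F₁ c₁ := by
      simp [treeCons, F₀, F₁]
    obtain ⟨z₀, hz₀, hF₀, hle₀⟩ := ih₀ F₀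
    obtain ⟨z₁, hz₁, hF₁, hle₁⟩ := ih₁ F₁
    obtain ⟨θ, hθ, hFθ, hleθ⟩ := exists_abs_eq_one_apply_single_le F (c [])
    have hFw : F (treeCons 0 z₀ z₁) = F₀ z₀ + F₁ z₁ := by simp [hF]
    set m := max (treeNorm (subtree false c)) (treeNorm (subtree true c))
    have hm : 0 ≤ m := (treeNorm_nonneg _).trans (le_max_left _ _)
    have hc : F c ≤ |c []| * F (Finsupp.single [] θ) + m * F (treeCons 0 z₀ z₁) :=
      calc F c = F (Finsupp.single [] (c [])) + F₀ (subtree false c) + F₁ (subtree true c) := by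
            rw [← hF, treeCons_subtree]
        _ ≤ |c []| * F (Finsupp.single [] θ) + m * F₀ z₀ + m * F₁ z₁ := by
            gcongr
            · exact hle₀.trans (mul_le_mul_of_nonneg_right (le_max_left _ _) hF₀)
            · exact hle₁.trans (mul_le_mul_of_nonneg_right (le_max_right _ _) hF₁)
        _ = _ := by rw [hFw]; ring
    have hmax : F c ≤ treeNorm c * max (F (Finsupp.single [] θ)) (F (treeCons 0 z₀ z₁)) := by
      rw [treeNorm_eq_abs_add_max, add_mul]
      exact hc.trans (by gcongr; exacts [le_max_left _ _, le_max_right _ _])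
    rcases max_choice (F (Finsupp.single [] θ)) (F (treeCons 0 z₀ z₁)) with h | h <;>
      rw [h] at hmax
    · exact ⟨_, .root hθ, hFθ, hmax⟩
    · exact ⟨_, .node hz₀ hz₁, hFw ▸ add_nonneg hF₀ hF₁, hmax⟩

section NormedSpace

variable {X : Type*} [NormedAddCommGroup X] [NormedSpace ℝ X] {L : (TreeNode →₀ ℝ) →ₗ[ℝ] X}

theorem IsAntichainSign.norm_add_one_le (hL : ∀ c, ‖L c‖ = treeNorm c) (hLd : DenseRange L)
    {z : TreeNode →₀ ℝ} (hz : IsAntichainSign z) (y : X) :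
    ‖y‖ + 1 ≤ max ‖y + L z‖ ‖y - L z‖ :=
  hLd.induction_on y (isClosed_le (by fun_prop) (by fun_prop)) fun d => by
    simpa only [← map_add, ← map_sub, hL] using hz.treeNorm_add_one_le d

theorem exists_isAntichainSign_mem_ballSlice (hL : ∀ c, ‖L c‖ = treeNorm c) (hLd : DenseRange L)
    (f : X →L[ℝ] ℝ) {δ : ℝ} (hδ : 0 < δ) :
    ∃ z, IsAntichainSign z ∧ L z ∈ ballSlice (closedBall 0 1) f δ := by
  set σ := sSup (f '' closedBall (0 : X) 1)
  by_contra! h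
  have hbound : ∀ z, IsAntichainSign z → f (L z) ≤ σ - δ := fun z hz => by
    by_contra! hlt
    exact h z hz ⟨by simp [hL, hz.treeNorm_eq_one], hlt⟩
  have hσδ : 0 ≤ σ - δ := by
    obtain ⟨z, hz, hfz, -⟩ := exists_isAntichainSign_le (f.toLinearMap ∘ₗ L) 0
    exact hfz.trans (hbound z hz)
  have hf : ∀ y, f y ≤ ‖y‖ * (σ - δ) := fun y =>
    hLd.induction_on y (isClosed_le (by fun_prop) (by fun_prop)) fun c => by
      obtain ⟨z, hz, -, hc⟩ := exists_isAntichainSign_le (f.toLinearMap ∘ₗ L) c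
      rw [hL]
      exact hc.trans (mul_le_mul_of_nonneg_left (hbound z hz) (treeNorm_nonneg c))
  have : σ ≤ σ - δ := csSup_le ⟨_, _, mem_closedBall_self zero_le_one, rfl⟩ <| by
    rintro _ ⟨y, hy, rfl⟩
    exact (hf y).trans (mul_le_of_le_one_left hσδ (mem_closedBall_zero_iff.mp hy))
  linarith

end NormedSpace

end BinaryTree

open BinaryTree in
theorem binary_tree_alternative_daugavet_general {X : Type*} [NormedAddCommGroup X]
    [NormedSpace ℝ X] (e : TreeNode → X)
    (hnorm : ∀ c : TreeNode →₀ ℝ, ‖c.sum fun t a => a • e t‖ = treeNorm c)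
    (hdense : DenseRange fun c : TreeNode →₀ ℝ => c.sum fun t a => a • e t)
    (x : X) (hx : ‖x‖ = 1) (f : X →L[ℝ] ℝ) (δ : ℝ) (hδ : 0 < δ) :
    sSup ((fun y => max ‖x + y‖ ‖x - y‖) '' ballSlice (closedBall (0 : X) 1) f δ) = 2 := by
  set L := Finsupp.linearCombination ℝ e
  have hL : ∀ c, ‖L c‖ = treeNorm c := hnorm
  obtain ⟨z, hz, hzS⟩ := exists_isAntichainSign_mem_ballSlice hL hdense f hδ
  have hbound : ∀ y ∈ closedBall (0 : X) 1, max ‖x + y‖ ‖x - y‖ ≤ 2 := fun y hy => by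
    have := mem_closedBall_zero_iff.mp hy
    exact max_le (by linarith [norm_add_le x y]) (by linarith [norm_sub_le x y])
  refine IsGreatest.csSup_eq ⟨⟨L z, hzS, le_antisymm (hbound _ hzS.1) ?_⟩, ?_⟩
  · linarith [hz.norm_add_one_le hL hdense x]
  · rintro _ ⟨y, hy, rfl⟩
    exact hbound y hy.1

/-- **The binary tree space has the alternative Daugavet property:** for every `x` in the unit
sphere and every slice `S` of the closed unit ball,
`sup_{y ∈ S} max_{θ ∈ {-1,1}} ‖x + θ y‖ = 2`. -/
theorem binary_tree_alternative_daugavet {X : Type*} [NormedAddCommGroup X]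
    [NormedSpace ℝ X] [CompleteSpace X] (e : TreeNode → X)
    (hnorm : ∀ c : TreeNode →₀ ℝ, ‖c.sum fun t a => a • e t‖ = treeNorm c)
    (hdense : DenseRange fun c : TreeNode →₀ ℝ => c.sum fun t a => a • e t)
    (x : X) (hx : ‖x‖ = 1) (f : X →L[ℝ] ℝ) (δ : ℝ) (hδ : 0 < δ) :
    sSup ((fun y => max ‖x + y‖ ‖x - y‖) '' ballSlice (closedBall (0 : X) 1) f δ) = 2 :=
  binary_tree_alternative_daugavet_general e hnorm hdense x hx f δ hδ
end
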